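/- arXiv:2211.04565 — 4 statements merged into one kernel-verified Lean document; each statement's English description precedes it below -/
import Mathlib

section
/- Let α>0 and θ>α, and suppose the α-th moment m(α)=∫_0^∞ y^α dF(y) is finite. Then 1−F is regularly varying with index −θ at infinity if and only if m(α)−H_α(x) is regularly varying with index α−θ, and either condition implies (m(α)−H_α(x))/(x^α(1−F(x))) → θ/(θ−α) as x→∞. -/
open MeasureTheory Set Filter Topology

/-- The cumulative distribution function of a measure `μ` on `ℝ`. -/
noncomputable def distF (μ : Measure ℝ) (x : ℝ) : ℝ := (μ (Iic x)).toReal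

/-- Truncated `α`-th moment `H_α(x) = ∫_{[0,x]} y^α dF(y)`. -/
noncomputable def Htr (μ : Measure ℝ) (α x : ℝ) : ℝ := ∫ y in Iic x, y ^ α ∂μ

/-- `W_α(x) = ∫_0^x y^(α-1) (1 - F(y)) dy` (Lebesgue integral). -/
noncomputable def Wtr (μ : Measure ℝ) (α x : ℝ) : ℝ :=
  ∫ y in Ioc (0:ℝ) x, y ^ (α - 1) * (1 - distF μ y)

/-- The Williamson transform `G_α(x) = ∫_{[0,x]} (1 - (t/x)^α) dF(t)`. -/
noncomputable def Gw (μ : Measure ℝ) (α x : ℝ) : ℝ := ∫ t in Iic x, (1 - (t / x) ^ α) ∂μ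

/-- `g` is regularly varying at infinity with index `ρ`. -/
def RegVary (g : ℝ → ℝ) (ρ : ℝ) : Prop :=
  ∀ t : ℝ, 0 < t → Tendsto (fun x => g (t * x) / g x) atTop (𝓝 (t ^ ρ))

namespace Stmt14Aux

set_option linter.unusedSectionVars false
set_option linter.unusedVariables false
set_option maxHeartbeats 1000000

/-! ### Pure analysis auxiliary lemmas -/

lemma slope_key (c : ℝ) :
    Tendsto (fun t : ℝ => (t ^ c - 1) / (t - 1)) (𝓝[>] (1:ℝ)) (𝓝 c) := by
  have h := Real.hasDerivAt_rpow_const (x := (1:ℝ)) (p := c) (Or.inl one_ne_zero)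
  rw [hasDerivAt_iff_tendsto_slope] at h
  have h2 := h.mono_left (nhdsWithin_mono _ (fun x hx => ne_of_gt hx : Ioi (1:ℝ) ⊆ {(1:ℝ)}ᶜ))
  simp only [Real.one_rpow, mul_one, Real.rpow_one] at h2
  refine h2.congr fun t => ?_
  simp [slope_def_field, Real.one_rpow]

lemma ratio_key {a b : ℝ} (hb : b ≠ 0) :
    Tendsto (fun t : ℝ => (1 - t ^ a) / (1 - t ^ b)) (𝓝[>] (1:ℝ)) (𝓝 (a / b)) := by
  have h := (slope_key a).div (slope_key b) hb
  refine h.congr' ?_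
  filter_upwards [self_mem_nhdsWithin] with t ht
  have hz : t - 1 ≠ 0 := sub_ne_zero.2 (ne_of_gt ht)
  show (t ^ a - 1) / (t - 1) / ((t ^ b - 1) / (t - 1)) = (1 - t ^ a) / (1 - t ^ b)
  rw [div_div_eq_mul_div, div_mul_cancel₀ _ hz, ← neg_sub (t ^ a) 1, ← neg_sub (t ^ b) 1,
    neg_div_neg_eq]

lemma rpow_one_tendsto (c : ℝ) :
    Tendsto (fun t : ℝ => t ^ c) (𝓝[>] (1:ℝ)) (𝓝 1) := by
  have h := (Real.continuousAt_rpow_const 1 c (Or.inl one_ne_zero)).tendsto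
  rw [Real.one_rpow] at h
  exact h.mono_left nhdsWithin_le_nhds

lemma le_of_forall_pos_mul {u v c : ℝ} (hc : 0 ≤ c)
    (h : ∀ ε : ℝ, 0 < ε → u ≤ v + c * ε) : u ≤ v := by
  refine le_of_forall_pos_le_add fun ε hε => ?_
  have h1 := h (ε / (c + 1)) (by positivity)
  have h2 : c * (ε / (c + 1)) ≤ ε := by
    rw [mul_div_assoc', div_le_iff₀ (by linarith)]
    nlinarith
  linarith

lemma limsup_rec {L a b : ℝ → ℝ} {A B C t : ℝ}
    (hC : ∀ᶠ x in atTop, L x ≤ C) (h0 : ∀ᶠ x in atTop, 0 ≤ L x)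
    (hb0 : ∀ᶠ x in atTop, 0 ≤ b x)
    (ha : Tendsto a atTop (𝓝 A)) (hbB : Tendsto b atTop (𝓝 B))
    (ht : 0 < t)
    (hrec : ∀ᶠ x in atTop, L x ≤ a x + b x * L (t * x)) :
    limsup L atTop ≤ A + B * limsup L atTop := by
  have hbdd : IsBoundedUnder (· ≤ ·) atTop L := ⟨C, eventually_map.2 hC⟩
  have hbdd' : IsBoundedUnder (· ≥ ·) atTop L := ⟨0, eventually_map.2 h0⟩
  have hcob : IsCoboundedUnder (· ≤ ·) atTop L := hbdd'.isCoboundedUnder_le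
  set S := limsup L atTop with hS
  have hB0 : 0 ≤ B := ge_of_tendsto hbB hb0
  refine le_of_forall_pos_mul hB0 fun ε hε => ?_
  have htend : Tendsto (fun x => t * x) atTop atTop :=
    Tendsto.const_mul_atTop ht tendsto_id
  have h1 : ∀ᶠ x in atTop, L (t * x) < S + ε :=
    htend.eventually (eventually_lt_of_limsup_lt (by linarith) hbdd)
  have h2 : ∀ᶠ x in atTop, L x ≤ a x + b x * (S + ε) := by
    filter_upwards [hrec, h1, hb0] with x hx h1x hbx
    exact hx.trans (add_le_add_right (mul_le_mul_of_nonneg_left h1x.le hbx) _)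
  have h3 : Tendsto (fun x => a x + b x * (S + ε)) atTop (𝓝 (A + B * (S + ε))) :=
    ha.add (hbB.mul_const _)
  have h4 : S ≤ A + B * (S + ε) :=
    (limsup_le_limsup h2 hcob h3.isBoundedUnder_le).trans_eq h3.limsup_eq
  nlinarith

lemma liminf_rec {L a b : ℝ → ℝ} {A B C t : ℝ}
    (hC : ∀ᶠ x in atTop, L x ≤ C) (h0 : ∀ᶠ x in atTop, 0 ≤ L x)
    (hb0 : ∀ᶠ x in atTop, 0 ≤ b x)
    (ha : Tendsto a atTop (𝓝 A)) (hbB : Tendsto b atTop (𝓝 B))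
    (ht : 0 < t)
    (hrec : ∀ᶠ x in atTop, a x + b x * L (t * x) ≤ L x) :
    A + B * liminf L atTop ≤ liminf L atTop := by
  have hbdd : IsBoundedUnder (· ≤ ·) atTop L := ⟨C, eventually_map.2 hC⟩
  have hbdd' : IsBoundedUnder (· ≥ ·) atTop L := ⟨0, eventually_map.2 h0⟩
  have hcob : IsCoboundedUnder (· ≥ ·) atTop L := hbdd.isCoboundedUnder_ge
  set I := liminf L atTop with hI
  have hB0 : 0 ≤ B := ge_of_tendsto hbB hb0
  have key : ∀ ε : ℝ, 0 < ε → A + B * I ≤ I + B * ε := by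
    intro ε hε
    have htend : Tendsto (fun x => t * x) atTop atTop :=
      Tendsto.const_mul_atTop ht tendsto_id
    have h1 : ∀ᶠ x in atTop, I - ε < L (t * x) :=
      htend.eventually (eventually_lt_of_lt_liminf (by linarith) hbdd')
    have h2 : ∀ᶠ x in atTop, a x + b x * (I - ε) ≤ L x := by
      filter_upwards [hrec, h1, hb0] with x hx h1x hbx
      exact le_trans (add_le_add_right (mul_le_mul_of_nonneg_left h1x.le hbx) _) hx
    have h3 : Tendsto (fun x => a x + b x * (I - ε)) atTop (𝓝 (A + B * (I - ε))) :=
      ha.add (hbB.mul_const _)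
    have h4 : A + B * (I - ε) ≤ I :=
      h3.liminf_eq.symm.trans_le (liminf_le_liminf h2 h3.isBoundedUnder_ge hcob)
    nlinarith
  refine le_of_forall_pos_mul hB0 key

lemma pos_of_regvary {g : ℝ → ℝ} {ρ : ℝ} (hg : RegVary g ρ) (hanti : Antitone g)
    (hnn : ∀ x, 0 ≤ g x) : ∀ x, 0 < g x := by
  have h1 := hg 1 one_pos
  simp only [one_mul, Real.one_rpow] at h1
  have h2 : ∀ᶠ x in atTop, g x / g x ≠ 0 := h1.eventually_ne one_ne_zero
  obtain ⟨X, hX⟩ := eventually_atTop.1 h2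
  intro x
  have hax := hX (max x X) (le_max_right _ _)
  have hne : g (max x X) ≠ 0 := fun h => by simp [h] at hax
  have hpos : 0 < g (max x X) := (hnn _).lt_of_ne (Ne.symm hne)
  exact lt_of_lt_of_le hpos (hanti (le_max_left _ _))

/-! ### The tail functions -/

noncomputable def Uf (μ : Measure ℝ) (x : ℝ) : ℝ := (μ (Ioi x)).toReal

noncomputable def Tf (μ : Measure ℝ) (α x : ℝ) : ℝ := ∫ y in Ioi x, y ^ α ∂μ

section MeasureLemmas

variable (μ : Measure ℝ) [IsProbabilityMeasure μ] {α : ℝ}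

lemma hU_eq (x : ℝ) : 1 - distF μ x = Uf μ x := by
  have h := measure_add_measure_compl (μ := μ) (measurableSet_Iic (a := x))
  rw [compl_Iic, measure_univ] at h
  have h2 : (μ (Iic x)).toReal + (μ (Ioi x)).toReal = 1 := by
    rw [← ENNReal.toReal_add (measure_ne_top μ _) (measure_ne_top μ _), h, ENNReal.toReal_one]
  simp only [Uf, distF]; linarith

lemma hT_eq (hmom : Integrable (fun y : ℝ => y ^ α) μ) (x : ℝ) :
    (∫ y : ℝ, y ^ α ∂μ) - Htr μ α x = Tf μ α x := by
  have h := integral_add_compl (measurableSet_Iic (a := x)) hmom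
  rw [compl_Iic] at h
  simp only [Tf, Htr]; linarith

lemma hae (hsupp : μ (Iic 0) = 0) : ∀ᵐ y ∂μ, 0 < y := by
  have := (measure_eq_zero_iff_ae_notMem (μ := μ) (s := Iic 0)).1 hsupp
  filter_upwards [this] with y hy
  simpa using hy

lemma hT_antitone (hsupp : μ (Iic 0) = 0) (hmom : Integrable (fun y : ℝ => y ^ α) μ) :
    Antitone (Tf μ α) := by
  intro x z hxz
  refine setIntegral_mono_set hmom.integrableOn (ae_restrict_of_ae ?_)
    (HasSubset.Subset.eventuallyLE (Ioi_subset_Ioi hxz))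
  filter_upwards [hae μ hsupp] with y hy
  exact Real.rpow_nonneg hy.le _

lemma hT_nonneg (hsupp : μ (Iic 0) = 0) (x : ℝ) : 0 ≤ Tf μ α x := by
  refine setIntegral_nonneg_of_ae_restrict ?_
  filter_upwards [ae_restrict_of_ae (hae μ hsupp)] with y hy
  exact Real.rpow_nonneg hy.le _

lemma hT_tendsto (hmom : Integrable (fun y : ℝ => y ^ α) μ) :
    Tendsto (Tf μ α) atTop (𝓝 0) := by
  have h := tendsto_setIntegral_of_antitone (μ := μ) (f := fun y => y ^ α)
    (s := fun x : ℝ => Ioi x) (fun i => measurableSet_Ioi)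
    (fun i j hij => Ioi_subset_Ioi hij) ⟨0, hmom.integrableOn⟩
  have he : ⋂ x : ℝ, Ioi x = (∅ : Set ℝ) := by
    ext y
    simp only [mem_iInter, mem_Ioi, mem_empty_iff_false, iff_false, not_forall, not_lt]
    exact ⟨y, le_rfl⟩
  rwa [he, Measure.restrict_empty, integral_zero_measure] at h

lemma hU_antitone : Antitone (Uf μ) := fun x z hxz =>
  ENNReal.toReal_mono (measure_ne_top μ _) (measure_mono (Ioi_subset_Ioi hxz))

lemma hU_nonneg (x : ℝ) : 0 ≤ Uf μ x := ENNReal.toReal_nonneg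

lemma hUdiff {x z : ℝ} (hxz : x ≤ z) : Uf μ x - Uf μ z = (μ (Ioc x z)).toReal := by
  have h : μ (Ioi x) = μ (Ioc x z) + μ (Ioi z) := by
    rw [← Ioc_union_Ioi_eq_Ioi hxz]
    exact measure_union (Ioc_disjoint_Ioi le_rfl) measurableSet_Ioi
  simp only [Uf]
  rw [h, ENNReal.toReal_add (measure_ne_top μ _) (measure_ne_top μ _)]
  ring

lemma hTdiff (hmom : Integrable (fun y : ℝ => y ^ α) μ) {x z : ℝ} (hxz : x ≤ z) :
    Tf μ α x - Tf μ α z = ∫ y in Ioc x z, y ^ α ∂μ := by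
  have h : Tf μ α x = (∫ y in Ioc x z, y ^ α ∂μ) + Tf μ α z := by
    simp only [Tf]
    rw [← setIntegral_union (Ioc_disjoint_Ioi le_rfl) measurableSet_Ioi
      hmom.integrableOn hmom.integrableOn, Ioc_union_Ioi_eq_Ioi hxz]
  linarith

lemma hIoc_bound (hα : 0 < α) (hmom : Integrable (fun y : ℝ => y ^ α) μ)
    {x z : ℝ} (hx : 0 < x) (hxz : x ≤ z) :
    x ^ α * (μ (Ioc x z)).toReal ≤ (∫ y in Ioc x z, y ^ α ∂μ) ∧
      (∫ y in Ioc x z, y ^ α ∂μ) ≤ z ^ α * (μ (Ioc x z)).toReal := by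
  have hint : IntegrableOn (fun y : ℝ => y ^ α) (Ioc x z) μ := hmom.integrableOn
  have hconst : ∀ c : ℝ, IntegrableOn (fun _ : ℝ => c) (Ioc x z) μ :=
    fun c => integrableOn_const (measure_ne_top μ _) (by simp)
  constructor
  · have h := setIntegral_mono_on (μ := μ) (hconst (x ^ α)) hint measurableSet_Ioc
      (fun y hy => Real.rpow_le_rpow hx.le hy.1.le hα.le)
    rwa [setIntegral_const, smul_eq_mul, mul_comm] at h
  · have h := setIntegral_mono_on (μ := μ) hint (hconst (z ^ α)) measurableSet_Ioc
      (fun y hy => Real.rpow_le_rpow (hx.trans hy.1).le hy.2 hα.le)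
    rwa [setIntegral_const, smul_eq_mul, mul_comm] at h

lemma hxU_le_T (hα : 0 < α) (hmom : Integrable (fun y : ℝ => y ^ α) μ)
    {x : ℝ} (hx : 0 < x) : x ^ α * Uf μ x ≤ Tf μ α x := by
  have hconst : IntegrableOn (fun _ : ℝ => x ^ α) (Ioi x) μ :=
    integrableOn_const (measure_ne_top μ _) (by simp)
  have h := setIntegral_mono_on (μ := μ) hconst hmom.integrableOn measurableSet_Ioi
    (fun y hy => Real.rpow_le_rpow hx.le (le_of_lt hy) hα.le)
  rwa [setIntegral_const, smul_eq_mul, mul_comm] at h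

end MeasureLemmas

/-! ### Forward boundedness via Potter-type chaining -/

lemma rpow_pow (c : ℝ) (K : ℕ) : ((2:ℝ)^K : ℝ) ^ c = ((2:ℝ) ^ c) ^ K := by
  rw [← Real.rpow_natCast (2:ℝ) K, ← Real.rpow_natCast ((2:ℝ)^c) K,
    ← Real.rpow_mul (by norm_num), ← Real.rpow_mul (by norm_num), mul_comm]

lemma forward_bound (μ : Measure ℝ) [IsProbabilityMeasure μ] {α θ : ℝ}
    (hα : 0 < α) (hθα : α < θ)
    (hmom : Integrable (fun y : ℝ => y ^ α) μ)
    (hU : RegVary (Uf μ) (-θ)) (Upos : ∀ x, 0 < Uf μ x) :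
    ∃ C X : ℝ, 1 ≤ X ∧ ∀ x, X ≤ x → Tf μ α x ≤ C * (x ^ α * Uf μ x) := by
  set q : ℝ := (2:ℝ) ^ (-(α+θ)/2) with hqdef
  set r : ℝ := (2:ℝ) ^ α * q with hrdef
  have hq0 : 0 < q := Real.rpow_pos_of_pos (by norm_num) _
  have hr0 : 0 < r := mul_pos (Real.rpow_pos_of_pos (by norm_num) _) hq0
  have hr1 : r < 1 := by
    rw [hrdef, hqdef, ← Real.rpow_add (by norm_num)]
    exact Real.rpow_lt_one_of_one_lt_of_neg (by norm_num) (by linarith)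
  have hq : (2:ℝ) ^ (-θ) < q :=
    Real.rpow_lt_rpow_of_exponent_lt (by norm_num) (by linarith)
  have h2 := (hU 2 (by norm_num)).eventually_lt_const hq
  obtain ⟨X₀', hX₀'⟩ := eventually_atTop.1 h2
  set X₀ : ℝ := max X₀' 1 with hXdef
  have hX₀1 : (1:ℝ) ≤ X₀ := le_max_right _ _
  have hX₀ : ∀ x, X₀ ≤ x → Uf μ (2 * x) ≤ q * Uf μ x := by
    intro x hx
    have := hX₀' x (le_trans (le_max_left _ _) hx)
    rw [div_lt_iff₀ (Upos x)] at this
    exact this.le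
  have claim1 : ∀ x, X₀ ≤ x → ∀ k : ℕ, Uf μ ((2:ℝ)^k * x) ≤ q^k * Uf μ x := by
    intro x hx
    intro k
    induction k with
    | zero => simp
    | succ k ih =>
      have hxpos : 0 < x := lt_of_lt_of_le (by linarith) hx
      have h2k : X₀ ≤ (2:ℝ)^k * x :=
        le_trans hx (le_mul_of_one_le_left hxpos.le (one_le_pow₀ (by norm_num)))
      have step := hX₀ ((2:ℝ)^k * x) h2k
      have harg : (2:ℝ)^(k+1) * x = 2 * ((2:ℝ)^k * x) := by ring
      rw [harg]
      calc Uf μ (2 * ((2:ℝ)^k * x)) ≤ q * Uf μ ((2:ℝ)^k * x) := step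
        _ ≤ q * (q^k * Uf μ x) := by
            exact mul_le_mul_of_nonneg_left ih hq0.le
        _ = q^(k+1) * Uf μ x := by ring
  have claim2 : ∀ x, X₀ ≤ x → ∀ K : ℕ,
      Tf μ α x - Tf μ α ((2:ℝ)^K * x) ≤
        ((2:ℝ)^α * (x ^ α * Uf μ x)) * ∑ k ∈ Finset.range K, r^k := by
    intro x hx
    have hxpos : 0 < x := lt_of_lt_of_le (by linarith) hx
    intro K
    induction K with
    | zero => simp
    | succ K ih =>
      set y : ℝ := (2:ℝ)^K * x with hy
      have hypos : 0 < y := mul_pos (by positivity) hxpos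
      have hy2 : y ≤ 2 * y := by linarith
      have hstep : Tf μ α y - Tf μ α (2 * y) ≤ (2*y) ^ α * (Uf μ y - Uf μ (2*y)) := by
        rw [hTdiff μ hmom hy2]
        have h := (hIoc_bound μ hα hmom hypos hy2).2
        rwa [← hUdiff μ hy2] at h
      have hU2 : Uf μ y - Uf μ (2*y) ≤ Uf μ y := by
        have := hU_nonneg μ (2*y); linarith
      have hUk : Uf μ y ≤ q^K * Uf μ x := claim1 x hx K
      have hterm : Tf μ α y - Tf μ α (2 * y) ≤ ((2:ℝ)^α * (x ^ α * Uf μ x)) * r^K := by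
        have h2y : (2*y) ^ α = (2:ℝ)^α * ((2:ℝ)^K)^α * x^α := by
          rw [hy, ← mul_assoc, Real.mul_rpow (by positivity) hxpos.le,
            Real.mul_rpow (by norm_num) (by positivity)]
        have hpow : ((2:ℝ)^K : ℝ)^α * q^K = r^K := by
          rw [rpow_pow, ← mul_pow, hrdef]
        calc Tf μ α y - Tf μ α (2 * y) ≤ (2*y) ^ α * (Uf μ y - Uf μ (2*y)) := hstep
          _ ≤ (2*y) ^ α * Uf μ y := by
              apply mul_le_mul_of_nonneg_left hU2 (Real.rpow_nonneg (by linarith) _)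
          _ ≤ (2*y) ^ α * (q^K * Uf μ x) := by
              apply mul_le_mul_of_nonneg_left hUk (Real.rpow_nonneg (by linarith) _)
          _ = ((2:ℝ)^α * (x ^ α * Uf μ x)) * (((2:ℝ)^K)^α * q^K) := by rw [h2y]; ring
          _ = ((2:ℝ)^α * (x ^ α * Uf μ x)) * r^K := by rw [hpow]
      have harg : (2:ℝ)^(K+1) * x = 2 * y := by rw [hy]; ring
      rw [harg, Finset.sum_range_succ, mul_add]
      have := ih
      linarith
  refine ⟨(2:ℝ)^α * (1-r)⁻¹, X₀, hX₀1, fun x hx => ?_⟩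
  have hxpos : 0 < x := lt_of_lt_of_le (by linarith) hx
  have hsum : ∀ K : ℕ, ∑ k ∈ Finset.range K, r^k ≤ (1-r)⁻¹ := by
    intro K
    rw [geom_sum_eq (ne_of_lt hr1), div_le_iff_of_neg (by linarith : r - 1 < 0)]
    have h1r : (1-r)⁻¹ * (r - 1) = -1 := by
      have hh : r - 1 = -(1-r) := by ring
      rw [hh, mul_neg, inv_mul_cancel₀ (by linarith : (1:ℝ)-r ≠ 0)]
    nlinarith [pow_pos hr0 K]
  have hB : ∀ K : ℕ, Tf μ α x - Tf μ α ((2:ℝ)^K * x) ≤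
      ((2:ℝ)^α * (1-r)⁻¹) * (x ^ α * Uf μ x) := by
    intro K
    have h1 := claim2 x hx K
    have h2 : ((2:ℝ)^α * (x ^ α * Uf μ x)) * ∑ k ∈ Finset.range K, r^k ≤
        ((2:ℝ)^α * (1-r)⁻¹) * (x ^ α * Uf μ x) := by
      have hnn : (0:ℝ) ≤ (2:ℝ)^α * (x ^ α * Uf μ x) := by
        have h3 := hU_nonneg μ x
        have h4 : (0:ℝ) ≤ x ^ α := Real.rpow_nonneg hxpos.le _
        positivity
      calc ((2:ℝ)^α * (x ^ α * Uf μ x)) * ∑ k ∈ Finset.range K, r^k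
          ≤ ((2:ℝ)^α * (x ^ α * Uf μ x)) * (1-r)⁻¹ :=
            mul_le_mul_of_nonneg_left (hsum K) hnn
        _ = ((2:ℝ)^α * (1-r)⁻¹) * (x ^ α * Uf μ x) := by ring
    linarith
  have hlim : Tendsto (fun K : ℕ => Tf μ α ((2:ℝ)^K * x)) atTop (𝓝 0) := by
    have h1 : Tendsto (fun K : ℕ => (2:ℝ)^K * x) atTop atTop := by
      have := tendsto_pow_atTop_atTop_of_one_lt (r := (2:ℝ)) (by norm_num)
      simpa [mul_comm] using this.atTop_mul_const hxpos
    exact (hT_tendsto μ hmom).comp h1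
  have hfin : Tendsto (fun K : ℕ => Tf μ α x - Tf μ α ((2:ℝ)^K * x)) atTop (𝓝 (Tf μ α x)) := by
    simpa using tendsto_const_nhds.sub hlim
  exact le_of_tendsto hfin (Eventually.of_forall hB)


lemma prop1 (μ : Measure ℝ) [IsProbabilityMeasure μ] {α θ : ℝ}
    (hα : 0 < α) (hθα : α < θ) (hsupp : μ (Iic 0) = 0)
    (hmom : Integrable (fun y : ℝ => y ^ α) μ)
    (hU : RegVary (Uf μ) (-θ)) :
    Tendsto (fun x => Tf μ α x / (x ^ α * Uf μ x)) atTop (𝓝 (θ / (θ - α))) := by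
  have Upos : ∀ x, 0 < Uf μ x := pos_of_regvary hU (hU_antitone μ) (hU_nonneg μ)
  set L : ℝ → ℝ := fun x => Tf μ α x / (x ^ α * Uf μ x) with hL
  have hL0 : ∀ᶠ x in atTop, 0 ≤ L x := by
    filter_upwards [eventually_ge_atTop (1:ℝ)] with x hx
    have hxpos : (0:ℝ) < x := by linarith
    exact div_nonneg (hT_nonneg μ hsupp x)
      (mul_nonneg (Real.rpow_nonneg hxpos.le _) (hU_nonneg μ x))
  obtain ⟨C, X, hX1, hCX⟩ := forward_bound μ hα hθα hmom hU Upos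
  have hLC : ∀ᶠ x in atTop, L x ≤ C := by
    filter_upwards [eventually_ge_atTop X] with x hx
    have hxpos : (0:ℝ) < x := by linarith
    have hden : (0:ℝ) < x ^ α * Uf μ x :=
      mul_pos (Real.rpow_pos_of_pos hxpos _) (Upos x)
    rw [hL, div_le_iff₀ hden]
    calc Tf μ α x ≤ C * (x ^ α * Uf μ x) := hCX x hx
      _ = C * (x ^ α * Uf μ x) := rfl
  -- key recursion inequalities
  have key : ∀ t : ℝ, 1 < t → ∀ᶠ x in atTop,
      (1 - Uf μ (t*x)/Uf μ x) + (t ^ α * (Uf μ (t*x)/Uf μ x)) * L (t*x) ≤ L x ∧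
      L x ≤ t ^ α * (1 - Uf μ (t*x)/Uf μ x) + (t ^ α * (Uf μ (t*x)/Uf μ x)) * L (t*x) := by
    intro t ht
    filter_upwards [eventually_ge_atTop (1:ℝ)] with x hx
    have hxpos : (0:ℝ) < x := by linarith
    have htpos : (0:ℝ) < t := by linarith
    have htx : x ≤ t * x := by nlinarith
    have htxpos : (0:ℝ) < t * x := by nlinarith
    have hxa : (0:ℝ) < x ^ α := Real.rpow_pos_of_pos hxpos _
    have hta : (0:ℝ) < t ^ α := Real.rpow_pos_of_pos htpos _
    have htxa : (t*x) ^ α = t ^ α * x ^ α := Real.mul_rpow htpos.le hxpos.le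
    have hUx := Upos x
    have hUtx := Upos (t*x)
    have hΔU : Uf μ x - Uf μ (t*x) = (μ (Ioc x (t*x))).toReal := hUdiff μ htx
    have hΔT : Tf μ α x - Tf μ α (t*x) = ∫ y in Ioc x (t*x), y ^ α ∂μ := hTdiff μ hmom htx
    obtain ⟨hlow, hup⟩ := hIoc_bound μ hα hmom hxpos htx
    rw [← hΔU] at hlow hup
    rw [← hΔT] at hlow hup
    have hTtx : Tf μ α (t*x) = L (t*x) * ((t*x) ^ α * Uf μ (t*x)) := by
      rw [hL]
      field_simp
    have hden : (0:ℝ) < x ^ α * Uf μ x := mul_pos hxa hUx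
    constructor
    · rw [hL, le_div_iff₀ hden]
      have expand : ((1 - Uf μ (t*x)/Uf μ x) + (t ^ α * (Uf μ (t*x)/Uf μ x)) * L (t*x)) *
          (x ^ α * Uf μ x)
          = x ^ α * (Uf μ x - Uf μ (t*x)) + L (t*x) * ((t*x) ^ α * Uf μ (t*x)) := by
        rw [htxa]
        field_simp
      rw [expand, ← hTtx]
      linarith
    · rw [hL, div_le_iff₀ hden]
      have expand : (t ^ α * (1 - Uf μ (t*x)/Uf μ x) + (t ^ α * (Uf μ (t*x)/Uf μ x)) * L (t*x)) *
          (x ^ α * Uf μ x)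
          = (t*x) ^ α * (Uf μ x - Uf μ (t*x)) + L (t*x) * ((t*x) ^ α * Uf μ (t*x)) := by
        rw [htxa]
        field_simp
      rw [expand, ← hTtx]
      linarith
  -- recursion conclusions
  set S := limsup L atTop with hSdef
  set I := liminf L atTop with hIdef
  have hbounds : ∀ t : ℝ, 1 < t →
      S ≤ t ^ α * (1 - t ^ (-θ)) / (1 - t ^ (α - θ)) ∧
      (1 - t ^ (-θ)) / (1 - t ^ (α - θ)) ≤ I := by
    intro t ht
    have htpos : (0:ℝ) < t := by linarith
    have hVt : Tendsto (fun x => Uf μ (t*x)/Uf μ x) atTop (𝓝 (t ^ (-θ))) := hU t htpos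
    have hb0 : ∀ᶠ x in atTop, 0 ≤ t ^ α * (Uf μ (t*x)/Uf μ x) :=
      Eventually.of_forall fun x =>
        mul_nonneg (Real.rpow_pos_of_pos htpos _).le (div_nonneg (hU_nonneg μ _) (hU_nonneg μ _))
    have hbB : Tendsto (fun x => t ^ α * (Uf μ (t*x)/Uf μ x)) atTop (𝓝 (t ^ (α - θ))) := by
      have h := hVt.const_mul (t ^ α)
      rwa [← Real.rpow_add htpos, ← sub_eq_add_neg] at h
    have haup : Tendsto (fun x => t ^ α * (1 - Uf μ (t*x)/Uf μ x)) atTop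
        (𝓝 (t ^ α * (1 - t ^ (-θ)))) := (tendsto_const_nhds.sub hVt).const_mul _
    have halow : Tendsto (fun x => 1 - Uf μ (t*x)/Uf μ x) atTop
        (𝓝 (1 - t ^ (-θ))) := tendsto_const_nhds.sub hVt
    have hrecu : ∀ᶠ x in atTop, L x ≤ (fun x => t ^ α * (1 - Uf μ (t*x)/Uf μ x)) x +
        (fun x => t ^ α * (Uf μ (t*x)/Uf μ x)) x * L (t*x) := by
      filter_upwards [key t ht] with x hx using hx.2
    have hrecl : ∀ᶠ x in atTop, (fun x => 1 - Uf μ (t*x)/Uf μ x) x +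
        (fun x => t ^ α * (Uf μ (t*x)/Uf μ x)) x * L (t*x) ≤ L x := by
      filter_upwards [key t ht] with x hx using hx.1
    have hS := limsup_rec hLC hL0 hb0 haup hbB htpos hrecu
    have hI := liminf_rec hLC hL0 hb0 halow hbB htpos hrecl
    have hβ : t ^ (α - θ) < 1 := Real.rpow_lt_one_of_one_lt_of_neg ht (by linarith)
    have hβpos : (0:ℝ) < 1 - t ^ (α - θ) := by linarith
    rw [← hSdef] at hS
    rw [← hIdef] at hI
    constructor
    · rw [le_div_iff₀ hβpos]
      nlinarith
    · rw [div_le_iff₀ hβpos]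
      nlinarith
  -- limits as t → 1⁺
  have hane : α - θ ≠ 0 := sub_ne_zero.2 (ne_of_lt hθα)
  have hval : (-θ) / (α - θ) = θ / (θ - α) := by
    rw [show α - θ = -(θ - α) by ring, div_neg, neg_div, neg_neg]
  have hratio : Tendsto (fun t : ℝ => (1 - t ^ (-θ)) / (1 - t ^ (α - θ)))
      (𝓝[>] (1:ℝ)) (𝓝 (θ / (θ - α))) := by
    have h := ratio_key (a := -θ) (b := α - θ) hane
    rwa [hval] at h
  have hS : S ≤ θ / (θ - α) := by
    have htend : Tendsto (fun t : ℝ => t ^ α * ((1 - t ^ (-θ)) / (1 - t ^ (α - θ))))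
        (𝓝[>] (1:ℝ)) (𝓝 (θ / (θ - α))) := by
      have h := (rpow_one_tendsto α).mul hratio
      rwa [one_mul] at h
    refine ge_of_tendsto htend ?_
    filter_upwards [self_mem_nhdsWithin] with t ht
    have h := (hbounds t ht).1
    rw [mul_div_assoc] at h
    exact h
  have hI : θ / (θ - α) ≤ I := by
    refine le_of_tendsto hratio ?_
    filter_upwards [self_mem_nhdsWithin] with t ht
    exact (hbounds t ht).2
  have hbdd : IsBoundedUnder (· ≤ ·) atTop L := ⟨C, eventually_map.2 hLC⟩
  have hbdd' : IsBoundedUnder (· ≥ ·) atTop L := ⟨0, eventually_map.2 hL0⟩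
  exact tendsto_of_le_liminf_of_limsup_le hI hS hbdd hbdd'

lemma prop2 (μ : Measure ℝ) [IsProbabilityMeasure μ] {α θ : ℝ}
    (hα : 0 < α) (hθα : α < θ) (hsupp : μ (Iic 0) = 0)
    (hmom : Integrable (fun y : ℝ => y ^ α) μ)
    (hT : RegVary (Tf μ α) (α - θ)) :
    Tendsto (fun x => x ^ α * Uf μ x / Tf μ α x) atTop (𝓝 ((θ - α) / θ)) := by
  have Tpos : ∀ x, 0 < Tf μ α x :=
    pos_of_regvary hT (hT_antitone μ hsupp hmom) (hT_nonneg μ hsupp)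
  set M : ℝ → ℝ := fun x => x ^ α * Uf μ x / Tf μ α x with hM
  have hM0 : ∀ᶠ x in atTop, 0 ≤ M x := by
    filter_upwards [eventually_ge_atTop (1:ℝ)] with x hx
    have hxpos : (0:ℝ) < x := by linarith
    exact div_nonneg (mul_nonneg (Real.rpow_nonneg hxpos.le _) (hU_nonneg μ x)) (Tpos x).le
  have hM1 : ∀ᶠ x in atTop, M x ≤ 1 := by
    filter_upwards [eventually_ge_atTop (1:ℝ)] with x hx
    have hxpos : (0:ℝ) < x := by linarith
    rw [hM, div_le_one (Tpos x)]
    exact hxU_le_T μ hα hmom hxpos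
  have key : ∀ t : ℝ, 1 < t → ∀ᶠ x in atTop,
      t ^ (-α) * (1 - Tf μ α (t*x)/Tf μ α x) + (t ^ (-α) * (Tf μ α (t*x)/Tf μ α x)) * M (t*x)
        ≤ M x ∧
      M x ≤ (1 - Tf μ α (t*x)/Tf μ α x) + (t ^ (-α) * (Tf μ α (t*x)/Tf μ α x)) * M (t*x) := by
    intro t ht
    filter_upwards [eventually_ge_atTop (1:ℝ)] with x hx
    have hxpos : (0:ℝ) < x := by linarith
    have htpos : (0:ℝ) < t := by linarith
    have htx : x ≤ t * x := by nlinarith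
    have htxpos : (0:ℝ) < t * x := by nlinarith
    have hxa : (0:ℝ) < x ^ α := Real.rpow_pos_of_pos hxpos _
    have hta : (0:ℝ) < t ^ α := Real.rpow_pos_of_pos htpos _
    have htna : t ^ (-α) = (t ^ α)⁻¹ := Real.rpow_neg htpos.le α
    have htxa : (t*x) ^ α = t ^ α * x ^ α := Real.mul_rpow htpos.le hxpos.le
    have hTx := Tpos x
    have hTtx := Tpos (t*x)
    have hΔU : Uf μ x - Uf μ (t*x) = (μ (Ioc x (t*x))).toReal := hUdiff μ htx
    have hΔT : Tf μ α x - Tf μ α (t*x) = ∫ y in Ioc x (t*x), y ^ α ∂μ := hTdiff μ hmom htx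
    obtain ⟨hlow, hup⟩ := hIoc_bound μ hα hmom hxpos htx
    rw [← hΔU] at hlow hup
    rw [← hΔT] at hlow hup
    have hUtx : Uf μ (t*x) = M (t*x) * Tf μ α (t*x) / ((t*x) ^ α) := by
      rw [hM]
      field_simp
    have hden : (0:ℝ) < Tf μ α x := hTx
    constructor
    · rw [hM, le_div_iff₀ hden]
      have expand : (t ^ (-α) * (1 - Tf μ α (t*x)/Tf μ α x) +
          (t ^ (-α) * (Tf μ α (t*x)/Tf μ α x)) * M (t*x)) * Tf μ α x
          = (t^α)⁻¹ * (Tf μ α x - Tf μ α (t*x)) + x ^ α * (M (t*x) * Tf μ α (t*x) / ((t*x) ^ α)) := by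
        rw [htna, htxa]
        field_simp
      rw [expand, ← hUtx]
      have hbit : (t^α)⁻¹ * (Tf μ α x - Tf μ α (t*x)) ≤ x ^ α * (Uf μ x - Uf μ (t*x)) := by
        rw [inv_mul_le_iff₀ hta]
        calc Tf μ α x - Tf μ α (t*x) ≤ (t*x) ^ α * (Uf μ x - Uf μ (t*x)) := hup
          _ = t ^ α * (x ^ α * (Uf μ x - Uf μ (t*x))) := by rw [htxa]; ring
      rw [mul_sub] at hbit
      linarith
    · rw [hM, div_le_iff₀ hden]
      have expand : ((1 - Tf μ α (t*x)/Tf μ α x) +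
          (t ^ (-α) * (Tf μ α (t*x)/Tf μ α x)) * M (t*x)) * Tf μ α x
          = (Tf μ α x - Tf μ α (t*x)) + x ^ α * (M (t*x) * Tf μ α (t*x) / ((t*x) ^ α)) := by
        rw [htna, htxa]
        field_simp
      rw [expand, ← hUtx]
      rw [mul_sub] at hlow
      linarith
  set S := limsup M atTop with hSdef
  set I := liminf M atTop with hIdef
  have hbounds : ∀ t : ℝ, 1 < t →
      S ≤ (1 - t ^ (α - θ)) / (1 - t ^ (-θ)) ∧
      t ^ (-α) * ((1 - t ^ (α - θ)) / (1 - t ^ (-θ))) ≤ I := by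
    intro t ht
    have htpos : (0:ℝ) < t := by linarith
    have hRt : Tendsto (fun x => Tf μ α (t*x)/Tf μ α x) atTop (𝓝 (t ^ (α - θ))) := hT t htpos
    have hb0 : ∀ᶠ x in atTop, 0 ≤ t ^ (-α) * (Tf μ α (t*x)/Tf μ α x) :=
      Eventually.of_forall fun x =>
        mul_nonneg (Real.rpow_pos_of_pos htpos _).le (div_nonneg (Tpos _).le (Tpos _).le)
    have hbB : Tendsto (fun x => t ^ (-α) * (Tf μ α (t*x)/Tf μ α x)) atTop (𝓝 (t ^ (-θ))) := by
      have h := hRt.const_mul (t ^ (-α))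
      rwa [← Real.rpow_add htpos, show -α + (α - θ) = -θ by ring] at h
    have haup : Tendsto (fun x => 1 - Tf μ α (t*x)/Tf μ α x) atTop
        (𝓝 (1 - t ^ (α - θ))) := tendsto_const_nhds.sub hRt
    have halow : Tendsto (fun x => t ^ (-α) * (1 - Tf μ α (t*x)/Tf μ α x)) atTop
        (𝓝 (t ^ (-α) * (1 - t ^ (α - θ)))) := haup.const_mul _
    have hrecu : ∀ᶠ x in atTop, M x ≤ (fun x => 1 - Tf μ α (t*x)/Tf μ α x) x +
        (fun x => t ^ (-α) * (Tf μ α (t*x)/Tf μ α x)) x * M (t*x) := by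
      filter_upwards [key t ht] with x hx using hx.2
    have hrecl : ∀ᶠ x in atTop, (fun x => t ^ (-α) * (1 - Tf μ α (t*x)/Tf μ α x)) x +
        (fun x => t ^ (-α) * (Tf μ α (t*x)/Tf μ α x)) x * M (t*x) ≤ M x := by
      filter_upwards [key t ht] with x hx using hx.1
    have hS := limsup_rec hM1 hM0 hb0 haup hbB htpos hrecu
    have hI := liminf_rec hM1 hM0 hb0 halow hbB htpos hrecl
    have hβ : t ^ (-θ) < 1 := Real.rpow_lt_one_of_one_lt_of_neg ht (by linarith)
    have hβpos : (0:ℝ) < 1 - t ^ (-θ) := by linarith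
    rw [← hSdef] at hS
    rw [← hIdef] at hI
    constructor
    · rw [le_div_iff₀ hβpos]
      nlinarith
    · rw [mul_div_assoc'] at *
      rw [div_le_iff₀ hβpos]
      nlinarith
  have hθ0 : (0:ℝ) < θ := by linarith
  have hne : (-θ) ≠ 0 := by linarith
  have hval : (α - θ) / (-θ) = (θ - α) / θ := by
    rw [div_neg, show α - θ = -(θ - α) by ring, neg_div, neg_neg]
  have hratio : Tendsto (fun t : ℝ => (1 - t ^ (α - θ)) / (1 - t ^ (-θ)))
      (𝓝[>] (1:ℝ)) (𝓝 ((θ - α) / θ)) := by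
    have h := ratio_key (a := α - θ) (b := -θ) hne
    rwa [hval] at h
  have hS : S ≤ (θ - α) / θ := by
    refine ge_of_tendsto hratio ?_
    filter_upwards [self_mem_nhdsWithin] with t ht
    exact (hbounds t ht).1
  have hI : (θ - α) / θ ≤ I := by
    have htend : Tendsto (fun t : ℝ => t ^ (-α) * ((1 - t ^ (α - θ)) / (1 - t ^ (-θ))))
        (𝓝[>] (1:ℝ)) (𝓝 ((θ - α) / θ)) := by
      have h := (rpow_one_tendsto (-α)).mul hratio
      rwa [one_mul] at h
    refine le_of_tendsto htend ?_
    filter_upwards [self_mem_nhdsWithin] with t ht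
    exact (hbounds t ht).2
  have hbdd : IsBoundedUnder (· ≤ ·) atTop M := ⟨1, eventually_map.2 hM1⟩
  have hbdd' : IsBoundedUnder (· ≥ ·) atTop M := ⟨0, eventually_map.2 hM0⟩
  exact tendsto_of_le_liminf_of_limsup_le hI hS hbdd hbdd'

end Stmt14Aux

open Stmt14Aux in
theorem stmt14 (μ : Measure ℝ) [IsProbabilityMeasure μ] (hsupp : μ (Iic 0) = 0)
    (α θ : ℝ) (hα : 0 < α) (hθα : α < θ)
    (hmom : Integrable (fun y : ℝ => y ^ α) μ) :
    (RegVary (fun x => 1 - distF μ x) (-θ) ↔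
        RegVary (fun x => (∫ y : ℝ, y ^ α ∂μ) - Htr μ α x) (α - θ)) ∧
      (RegVary (fun x => 1 - distF μ x) (-θ) →
        Tendsto
          (fun x => ((∫ y : ℝ, y ^ α ∂μ) - Htr μ α x) / (x ^ α * (1 - distF μ x)))
          atTop (𝓝 (θ / (θ - α)))) := by
  have hUfun : (fun x => 1 - distF μ x) = Uf μ := funext fun x => hU_eq μ x
  have hTfun : (fun x => (∫ y : ℝ, y ^ α ∂μ) - Htr μ α x) = Tf μ α :=
    funext fun x => hT_eq μ hmom x
  have hθ0 : (0:ℝ) < θ := by linarith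
  constructor
  · rw [hUfun, hTfun]
    constructor
    · -- forward: U regularly varying implies T regularly varying
      intro hU
      have Upos : ∀ x, 0 < Uf μ x := pos_of_regvary hU (hU_antitone μ) (hU_nonneg μ)
      have hLlim := prop1 μ hα hθα hsupp hmom hU
      have hc : θ / (θ - α) ≠ 0 := ne_of_gt (div_pos hθ0 (by linarith))
      intro t ht
      have hmul : Tendsto (fun x => t * x) atTop atTop :=
        Tendsto.const_mul_atTop ht tendsto_id
      have hLtx : Tendsto (fun x => Tf μ α (t*x) / ((t*x) ^ α * Uf μ (t*x))) atTop
          (𝓝 (θ / (θ - α))) := hLlim.comp hmul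
      have hiden : ∀ᶠ x in atTop,
          ((Tf μ α (t*x) / ((t*x) ^ α * Uf μ (t*x))) / (Tf μ α x / (x ^ α * Uf μ x))) *
            (t ^ α * (Uf μ (t*x) / Uf μ x)) = Tf μ α (t*x) / Tf μ α x := by
        filter_upwards [eventually_ge_atTop (1:ℝ)] with x hx
        have hxpos : (0:ℝ) < x := by linarith
        have htxpos : (0:ℝ) < t * x := mul_pos ht hxpos
        have hxa : (0:ℝ) < x ^ α := Real.rpow_pos_of_pos hxpos _
        have htxa : (0:ℝ) < (t*x) ^ α := Real.rpow_pos_of_pos htxpos _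
        have hUx := Upos x
        have hUtx := Upos (t*x)
        have hTx : (0:ℝ) < Tf μ α x :=
          lt_of_lt_of_le (mul_pos hxa hUx) (hxU_le_T μ hα hmom hxpos)
        have hTtx : (0:ℝ) < Tf μ α (t*x) :=
          lt_of_lt_of_le (mul_pos htxa hUtx) (hxU_le_T μ hα hmom htxpos)
        have htaeq : (t*x) ^ α = t ^ α * x ^ α := Real.mul_rpow (le_of_lt ht) hxpos.le
        rw [htaeq]
        field_simp
      have hlim := (hLtx.div hLlim hc).mul ((hU t ht).const_mul (t ^ α))
      rw [div_self hc, one_mul, ← Real.rpow_add ht, ← sub_eq_add_neg] at hlim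
      exact hlim.congr' hiden
    · -- converse: T regularly varying implies U regularly varying
      intro hT
      have hMlim := prop2 μ hα hθα hsupp hmom hT
      have Tpos : ∀ x, 0 < Tf μ α x :=
        pos_of_regvary hT (hT_antitone μ hsupp hmom) (hT_nonneg μ hsupp)
      have hc : (θ - α) / θ ≠ 0 := ne_of_gt (div_pos (by linarith) hθ0)
      intro t ht
      have hmul : Tendsto (fun x => t * x) atTop atTop :=
        Tendsto.const_mul_atTop ht tendsto_id
      have hMtx : Tendsto (fun x => (t*x) ^ α * Uf μ (t*x) / Tf μ α (t*x)) atTop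
          (𝓝 ((θ - α) / θ)) := hMlim.comp hmul
      have hMpos : ∀ᶠ x in atTop, 0 < (fun x => x ^ α * Uf μ x / Tf μ α x) x :=
        hMlim.eventually_const_lt (div_pos (by linarith) hθ0)
      have hMtxpos : ∀ᶠ x in atTop, 0 < (t*x) ^ α * Uf μ (t*x) / Tf μ α (t*x) :=
        hmul.eventually hMpos
      have hiden : ∀ᶠ x in atTop,
          (((t*x) ^ α * Uf μ (t*x) / Tf μ α (t*x)) / (x ^ α * Uf μ x / Tf μ α x)) *
            (t ^ (-α) * (Tf μ α (t*x) / Tf μ α x)) = Uf μ (t*x) / Uf μ x := by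
        filter_upwards [eventually_ge_atTop (1:ℝ), hMpos, hMtxpos] with x hx hMx hMtx2
        have hxpos : (0:ℝ) < x := by linarith
        have htxpos : (0:ℝ) < t * x := mul_pos ht hxpos
        have hxa : (0:ℝ) < x ^ α := Real.rpow_pos_of_pos hxpos _
        have htxa : (0:ℝ) < (t*x) ^ α := Real.rpow_pos_of_pos htxpos _
        have hTx := Tpos x
        have hTtx := Tpos (t*x)
        have hUx : (0:ℝ) < Uf μ x := by
          by_contra hcon
          push_neg at hcon
          have : x ^ α * Uf μ x / Tf μ α x ≤ 0 := by
            apply div_nonpos_of_nonpos_of_nonneg _ hTx.le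
            exact mul_nonpos_of_nonneg_of_nonpos hxa.le hcon
          linarith
        have hUtx : (0:ℝ) < Uf μ (t*x) := by
          by_contra hcon
          push_neg at hcon
          have : (t*x) ^ α * Uf μ (t*x) / Tf μ α (t*x) ≤ 0 := by
            apply div_nonpos_of_nonpos_of_nonneg _ hTtx.le
            exact mul_nonpos_of_nonneg_of_nonpos htxa.le hcon
          linarith
        have htaeq : (t*x) ^ α = t ^ α * x ^ α := Real.mul_rpow (le_of_lt ht) hxpos.le
        have htna : t ^ (-α) = (t ^ α)⁻¹ := Real.rpow_neg (le_of_lt ht) α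
        have hta : (0:ℝ) < t ^ α := Real.rpow_pos_of_pos ht _
        rw [htaeq, htna]
        field_simp
      have hlim := (hMtx.div hMlim hc).mul ((hT t ht).const_mul (t ^ (-α)))
      rw [div_self hc, one_mul, ← Real.rpow_add ht,
        show -α + (α - θ) = -θ by ring] at hlim
      exact hlim.congr' hiden
  · -- the ratio limit
    intro hU
    rw [hUfun] at hU
    have hLlim := prop1 μ hα hθα hsupp hmom hU
    have heq : (fun x => ((∫ y : ℝ, y ^ α ∂μ) - Htr μ α x) / (x ^ α * (1 - distF μ x)))
        = fun x => Tf μ α x / (x ^ α * Uf μ x) :=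
      funext fun x => by rw [hT_eq μ hmom x, hU_eq μ x]
    rw [heq]
    exact hLlim
end

section
/- Let α>0 and suppose the limit (1−F(x))/(1−G_α(x)) → λ exists with 0≤λ<1, where G_α is the Williamson transform of F. Then 1−G_α(x) is regularly varying at infinity with index α(λ−1). -/
open MeasureTheory Set Filter Topology

open scoped ENNReal NNReal

section Basics
variable (μ : Measure ℝ) [IsProbabilityMeasure μ]

lemma F_mono : Monotone (distF μ) := fun a b hab =>
  ENNReal.toReal_mono (measure_ne_top μ _) (measure_mono (Iic_subset_Iic.2 hab))

lemma F_le_one (x : ℝ) : distF μ x ≤ 1 := by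
  have : μ (Iic x) ≤ 1 := (measure_mono (subset_univ _)).trans_eq measure_univ
  simpa [distF] using ENNReal.toReal_mono (by simp) this

omit [IsProbabilityMeasure μ] in
lemma F_nonneg (x : ℝ) : 0 ≤ distF μ x := ENNReal.toReal_nonneg

lemma measurable_F : Measurable (distF μ) :=
  Monotone.measurable fun a b hab =>
    ENNReal.toReal_mono (measure_ne_top μ _) (measure_mono (Iic_subset_Iic.2 hab))

lemma u_meas {α : ℝ} : Measurable (fun y : ℝ => y ^ (α - 1) * (1 - distF μ y)) :=
  ((by fun_prop : Measurable fun y : ℝ => y ^ (α - 1))).mul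
    (measurable_const.sub (measurable_F μ))

lemma u_intOn {α : ℝ} (hα : 0 < α) {a b : ℝ} (ha : 0 ≤ a) :
    IntegrableOn (fun y : ℝ => y ^ (α - 1) * (1 - distF μ y)) (Ioc a b) := by
  rcases le_or_gt b a with hba | hab
  · simp [Set.Ioc_eq_empty_of_le hba, IntegrableOn]
  have h1 : IntegrableOn (fun y : ℝ => y ^ (α - 1)) (Ioc 0 b) := by
    have := intervalIntegral.intervalIntegrable_rpow' (a := 0) (b := b)
      (show (-1:ℝ) < α - 1 by linarith)
    rwa [intervalIntegrable_iff_integrableOn_Ioc_of_le (by linarith)] at this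
  refine (Integrable.mono' (h1.mono_set (Ioc_subset_Ioc_left ha))
    ((u_meas μ).aestronglyMeasurable.restrict) ?_)
  filter_upwards [self_mem_ae_restrict measurableSet_Ioc] with y hy
  have hy0 : 0 < y := lt_of_le_of_lt ha hy.1
  have h1F : 0 ≤ 1 - distF μ y := by linarith [F_le_one μ y]
  have h1F' : 1 - distF μ y ≤ 1 := by linarith [F_nonneg μ y]
  have hr : (0:ℝ) ≤ y ^ (α - 1) := Real.rpow_nonneg hy0.le _
  rw [Real.norm_eq_abs, abs_of_nonneg (mul_nonneg hr h1F)]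
  nlinarith

lemma W_add {α : ℝ} (hα : 0 < α) {a b : ℝ} (ha : 0 ≤ a) (hab : a ≤ b) :
    Wtr μ α b = Wtr μ α a + ∫ y in Ioc a b, y ^ (α - 1) * (1 - distF μ y) := by
  rw [Wtr, Wtr, ← setIntegral_union (Ioc_disjoint_Ioc_of_le le_rfl) measurableSet_Ioc
      (u_intOn μ hα le_rfl) (u_intOn μ hα ha), Ioc_union_Ioc_eq_Ioc ha hab]

lemma W_mono {α : ℝ} (hα : 0 < α) {a b : ℝ} (ha : 0 ≤ a) (hab : a ≤ b) :
    Wtr μ α a ≤ Wtr μ α b := by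
  rw [W_add μ hα ha hab]
  have : 0 ≤ ∫ y in Ioc a b, y ^ (α - 1) * (1 - distF μ y) := by
    refine setIntegral_nonneg measurableSet_Ioc fun y hy => ?_
    exact mul_nonneg (Real.rpow_nonneg (le_of_lt (lt_of_le_of_lt ha hy.1)) _)
      (by linarith [F_le_one μ y])
  linarith

lemma tail_eq (y : ℝ) : μ (Ioi y) = ENNReal.ofReal (1 - distF μ y) := by
  have h2 : μ (Ioi y) = 1 - μ (Iic y) := by
    rw [← compl_Iic, measure_compl measurableSet_Iic (measure_ne_top μ _), measure_univ]
  rw [h2, distF, ENNReal.ofReal_sub _ ENNReal.toReal_nonneg,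
    ENNReal.ofReal_toReal (measure_ne_top μ _), ENNReal.ofReal_one]

lemma tail_toReal (y : ℝ) : (μ (Ioi y)).toReal = 1 - distF μ y := by
  rw [tail_eq μ y, ENNReal.toReal_ofReal (by linarith [F_le_one μ y])]

end Basics

section Key
variable (μ : Measure ℝ) [IsProbabilityMeasure μ]

lemma ae_pos (hsupp : μ (Iic 0) = 0) : ∀ᵐ y ∂μ, y ∈ Ioi (0:ℝ) := by
  rw [ae_iff]
  refine measure_mono_null (fun y hy => ?_) hsupp
  simpa using hy

lemma Iic_aeeq (hsupp : μ (Iic 0) = 0) {x : ℝ} (hx : 0 < x) :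
    (Iic x : Set ℝ) =ᵐ[μ] Ioc 0 x := by
  rw [MeasureTheory.ae_eq_set]
  constructor
  · refine measure_mono_null (fun y hy => ?_) hsupp
    simp only [mem_diff, mem_Iic, mem_Ioc, not_and] at hy ⊢
    by_contra hy0
    exact (hy.2 (lt_of_not_ge hy0)) hy.1
  · refine measure_mono_null (fun y hy => ?_) (measure_empty (μ := μ))
    exact absurd hy.1.2 (fun h => hy.2 h)

-- the moment integrand is integrable
lemma mom_intOn {α : ℝ} (hα : 0 < α) {x : ℝ} (hx : 0 < x) :
    IntegrableOn (fun y : ℝ => y ^ α) (Ioc 0 x) μ := by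
  refine Integrable.mono' (integrable_const (x ^ α))
    ((by fun_prop : Measurable fun y : ℝ => y ^ α)).aestronglyMeasurable.restrict ?_
  filter_upwards [self_mem_ae_restrict measurableSet_Ioc] with y hy
  rw [Real.norm_eq_abs, abs_of_nonneg (Real.rpow_nonneg hy.1.le _)]
  exact Real.rpow_le_rpow hy.1.le hy.2 hα.le

lemma key_enn (hsupp : μ (Iic 0) = 0) {α : ℝ} (hα : 0 < α) {x : ℝ} (hx : 0 < x) :
    ENNReal.ofReal (∫ y in Ioc 0 x, y ^ α ∂μ) + μ (Ioi x) * ENNReal.ofReal (x ^ α)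
      = ENNReal.ofReal α * ENNReal.ofReal (Wtr μ α x) := by
  have f_nn : 0 ≤ᵐ[μ] fun y : ℝ => min y x := by
    filter_upwards [ae_pos μ hsupp] with y hy; exact le_min hy.le hx.le
  have f_mble : AEMeasurable (fun y : ℝ => min y x) μ :=
    (measurable_id.min measurable_const).aemeasurable
  have key := lintegral_rpow_eq_lintegral_meas_lt_mul μ f_nn f_mble hα
  -- LHS of layercake
  have hL : ∫⁻ y, ENNReal.ofReal (min y x ^ α) ∂μ
      = ENNReal.ofReal (∫ y in Ioc 0 x, y ^ α ∂μ) + μ (Ioi x) * ENNReal.ofReal (x ^ α) := by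
    conv_lhs => rw [← Measure.restrict_eq_self_of_ae_mem (ae_pos μ hsupp)]
    rw [← Ioc_union_Ioi_eq_Ioi hx.le,
      lintegral_union measurableSet_Ioi (Ioc_disjoint_Ioi le_rfl)]
    congr 1
    · rw [ofReal_integral_eq_lintegral_ofReal (mom_intOn μ hα hx)]
      · refine setLIntegral_congr_fun_ae measurableSet_Ioc ?_
        filter_upwards with y hy
        rw [min_eq_left hy.2]
      · filter_upwards [self_mem_ae_restrict measurableSet_Ioc] with y hy
        exact Real.rpow_nonneg hy.1.le _
    · have : ∀ᵐ y ∂μ, y ∈ Ioi x → ENNReal.ofReal (min y x ^ α)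
          = ENNReal.ofReal (x ^ α) := by
        filter_upwards with y hy
        rw [min_eq_right hy.le]
      rw [setLIntegral_congr_fun_ae measurableSet_Ioi this, setLIntegral_const, mul_comm]
  -- RHS of layercake
  have hR : ∫⁻ t in Ioi 0, μ {a : ℝ | t < min a x} * ENNReal.ofReal (t ^ (α - 1))
      = ENNReal.ofReal (Wtr μ α x) := by
    have step1 : ∫⁻ t in Ioi 0, μ {a : ℝ | t < min a x} * ENNReal.ofReal (t ^ (α - 1))
        = ∫⁻ t in Ioo 0 x, μ (Ioi t) * ENNReal.ofReal (t ^ (α - 1)) := by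
      have e1 : ∫⁻ t in Ioi 0, μ {a : ℝ | t < min a x} * ENNReal.ofReal (t ^ (α - 1))
          = ∫⁻ t in Ioi 0, (Ioo (0:ℝ) x).indicator
              (fun t => μ (Ioi t) * ENNReal.ofReal (t ^ (α - 1))) t := by
        refine setLIntegral_congr_fun_ae measurableSet_Ioi
          (Filter.Eventually.of_forall fun t ht => ?_)
        rcases lt_or_ge t x with htx | hxt
        · rw [indicator_of_mem (show t ∈ Ioo (0:ℝ) x from ⟨ht, htx⟩)]
          have hset : {a : ℝ | t < min a x} = Ioi t := by
            ext a
            simp only [mem_setOf_eq, lt_min_iff, mem_Ioi]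
            exact ⟨fun h => h.1, fun h => ⟨h, htx⟩⟩
          rw [hset]
        · rw [indicator_of_notMem (fun hc => absurd hc.2 (not_lt.2 hxt))]
          have hset : {a : ℝ | t < min a x} = ∅ := by
            ext a
            simp only [mem_setOf_eq, lt_min_iff, mem_empty_iff_false, iff_false, not_and]
            exact fun _ => not_lt.2 hxt
          rw [hset, measure_empty, zero_mul]
      rw [e1, lintegral_indicator measurableSet_Ioo, Measure.restrict_restrict measurableSet_Ioo,
        inter_eq_self_of_subset_left Ioo_subset_Ioi_self]
    have step2 : ENNReal.ofReal (Wtr μ α x)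
        = ∫⁻ t in Ioo 0 x, μ (Ioi t) * ENNReal.ofReal (t ^ (α - 1)) := by
      rw [Wtr, ofReal_integral_eq_lintegral_ofReal (u_intOn μ hα le_rfl) ?_,
        ← Measure.restrict_congr_set Ioo_ae_eq_Ioc]
      · refine setLIntegral_congr_fun_ae measurableSet_Ioo
          (Filter.Eventually.of_forall fun t ht => ?_)
        rw [ENNReal.ofReal_mul (Real.rpow_nonneg ht.1.le _), ← tail_eq μ t, mul_comm]
      · filter_upwards [self_mem_ae_restrict measurableSet_Ioc] with y hy
        exact mul_nonneg (Real.rpow_nonneg hy.1.le _) (by linarith [F_le_one μ y])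
    rw [step1, ← step2]
  rw [← hL, key, hR]

lemma W_nonneg {α : ℝ} (hα : 0 < α) {x : ℝ} (hx : 0 ≤ x) : 0 ≤ Wtr μ α x := by
  have h0 : Wtr μ α 0 = 0 := by simp [Wtr]
  have := W_mono μ hα (le_refl (0:ℝ)) hx
  rwa [h0] at this

lemma key_real (hsupp : μ (Iic 0) = 0) {α : ℝ} (hα : 0 < α) {x : ℝ} (hx : 0 < x) :
    (∫ y in Ioc 0 x, y ^ α ∂μ) + (1 - distF μ x) * x ^ α = α * Wtr μ α x := by
  have hA : 0 ≤ ∫ y in Ioc 0 x, y ^ α ∂μ :=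
    setIntegral_nonneg measurableSet_Ioc fun y hy => Real.rpow_nonneg hy.1.le _
  have := congrArg ENNReal.toReal (key_enn μ hsupp hα hx)
  rwa [ENNReal.toReal_add (by simp) (by simp [ENNReal.mul_ne_top, measure_ne_top]),
    ENNReal.toReal_mul, ENNReal.toReal_mul, ENNReal.toReal_ofReal hA,
    ENNReal.toReal_ofReal (Real.rpow_nonneg hx.le _), tail_toReal,
    ENNReal.toReal_ofReal hα.le, ENNReal.toReal_ofReal (W_nonneg μ hα hx.le)] at this

lemma one_sub_Gw (hsupp : μ (Iic 0) = 0) {α : ℝ} (hα : 0 < α) {x : ℝ} (hx : 0 < x) :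
    1 - Gw μ α x = α * Wtr μ α x / x ^ α := by
  have hxα : (0:ℝ) < x ^ α := Real.rpow_pos_of_pos hx _
  have hint : IntegrableOn (fun t : ℝ => (t / x) ^ α) (Ioc 0 x) μ := by
    refine Integrable.mono' (integrable_const 1)
      ((by fun_prop : Measurable fun t : ℝ => (t / x) ^ α)).aestronglyMeasurable.restrict ?_
    filter_upwards [self_mem_ae_restrict measurableSet_Ioc] with t ht
    have h01 : 0 < t / x := div_pos ht.1 hx
    rw [Real.norm_eq_abs, abs_of_nonneg (Real.rpow_nonneg h01.le _)]
    exact Real.rpow_le_one h01.le (div_le_one_of_le₀ ht.2 hx.le) hα.le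
  have hGw : Gw μ α x = distF μ x - (∫ y in Ioc 0 x, y ^ α ∂μ) / x ^ α := by
    rw [Gw, setIntegral_congr_set (Iic_aeeq μ hsupp hx),
      integral_sub (integrable_const 1) hint]
    congr 1
    · rw [setIntegral_const, smul_eq_mul, mul_one, distF,
        measure_congr (Iic_aeeq μ hsupp hx)]
      rfl
    · rw [← integral_div]
      refine setIntegral_congr_fun measurableSet_Ioc fun t ht => ?_
      exact Real.div_rpow ht.1.le hx.le α
  have hkey := key_real μ hsupp hα hx
  rw [hGw]
  field_simp
  linarith

end Key

section Gronwall
variable {u W : ℝ → ℝ} {X ρp ρm : ℝ}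

lemma inv_int {a b c : ℝ} (ha : 0 < a) (hab : a ≤ b) :
    ∫ s in Ioc a b, c / s = c * (Real.log b - Real.log a) := by
  have h0 : (0:ℝ) ∉ Set.uIcc a b := by
    rw [Set.mem_uIcc]
    rintro (⟨h1, _⟩ | ⟨h1, _⟩) <;> linarith
  calc ∫ s in Ioc a b, c / s = ∫ s in a..b, c * (1/s) := by
        rw [intervalIntegral.integral_of_le hab]
        simp only [mul_one_div]
    _ = c * ∫ s in a..b, 1/s := intervalIntegral.integral_const_mul _ _
    _ = c * Real.log (b/a) := by rw [integral_one_div h0]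
    _ = c * (Real.log b - Real.log a) := by
        rw [Real.log_div (by linarith) (by linarith)]

lemma gronwall_step
    (hX : 0 < X)
    (hadd : ∀ a b, X ≤ a → a ≤ b → W b = W a + ∫ s in Ioc a b, u s)
    (hint : ∀ a b, X ≤ a → IntegrableOn u (Ioc a b) volume)
    (hmono : ∀ a b, X ≤ a → a ≤ b → W a ≤ W b)
    (hub : ∀ s, X ≤ s → u s ≤ ρp * W s / s)
    (hlb : ∀ s, X ≤ s → ρm * W s / s ≤ u s)
    (hρp : 0 ≤ ρp)
    {a b : ℝ} (ha : X ≤ a) (hab : a ≤ b) :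
    W b * (1 - ρp * (Real.log b - Real.log a)) ≤ W a ∧
    W a + min (ρm * W a) (ρm * W b) * (Real.log b - Real.log a) ≤ W b := by
  have ha0 : 0 < a := lt_of_lt_of_le hX ha
  have hieq : W b - W a = ∫ s in Ioc a b, u s := by linarith [hadd a b ha hab]
  have hcont : ∀ c : ℝ, IntegrableOn (fun s => c / s) (Ioc a b) volume := by
    intro c
    refine (ContinuousOn.integrableOn_Icc ?_).mono_set Ioc_subset_Icc_self
    exact continuousOn_const.div continuousOn_id (fun s hs =>
      (lt_of_lt_of_le ha0 hs.1).ne')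
  constructor
  · have hptw : ∀ s ∈ Ioc a b, u s ≤ ρp * W b / s := by
      intro s hs
      have hs0 : 0 < s := ha0.trans hs.1
      refine (hub s (ha.trans hs.1.le)).trans ?_
      gcongr
      exact hmono s b (ha.trans hs.1.le) hs.2
    have h1 : ∫ s in Ioc a b, u s ≤ ∫ s in Ioc a b, (ρp * W b) / s :=
      setIntegral_mono_on (hint a b ha) (hcont _) measurableSet_Ioc hptw
    rw [inv_int ha0 hab] at h1
    nlinarith [h1, hieq]
  · have hptw : ∀ s ∈ Ioc a b, (min (ρm * W a) (ρm * W b)) / s ≤ u s := by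
      intro s hs
      have hs0 : 0 < s := ha0.trans hs.1
      refine le_trans ?_ (hlb s (ha.trans hs.1.le))
      have hWa : W a ≤ W s := hmono a s ha hs.1.le
      have hWb : W s ≤ W b := hmono s b (ha.trans hs.1.le) hs.2
      have : min (ρm * W a) (ρm * W b) ≤ ρm * W s := by
        rcases le_or_gt 0 ρm with hρ | hρ
        · exact (min_le_left _ _).trans (by nlinarith)
        · exact (min_le_right _ _).trans (by nlinarith)
      gcongr
    have h1 : ∫ s in Ioc a b, (min (ρm * W a) (ρm * W b)) / s ≤ ∫ s in Ioc a b, u s :=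
      setIntegral_mono_on (hcont _) (hint a b ha) measurableSet_Ioc hptw
    rw [inv_int ha0 hab] at h1
    linarith [h1, hieq]

lemma gronwall_chain
    (hX : 0 < X)
    (hadd : ∀ a b, X ≤ a → a ≤ b → W b = W a + ∫ s in Ioc a b, u s)
    (hint : ∀ a b, X ≤ a → IntegrableOn u (Ioc a b) volume)
    (hmono : ∀ a b, X ≤ a → a ≤ b → W a ≤ W b)
    (hposX : 0 < W X)
    (hub : ∀ s, X ≤ s → u s ≤ ρp * W s / s)
    (hlb : ∀ s, X ≤ s → ρm * W s / s ≤ u s)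
    (hρp : 0 ≤ ρp)
    {x q : ℝ} (hx : X ≤ x) (hq : 0 ≤ q) (hqp : ρp * q < 1) (hqm : ρm * q < 1)
    (hqm' : -1 < ρm * q) :
    ∀ k : ℕ, W (x * Real.exp (k * q)) ≤ W x / (1 - ρp * q) ^ k ∧
      W x * (1 + ρm * q) ^ k ≤ W (x * Real.exp (k * q)) := by
  have hx0 : 0 < x := hX.trans_le hx
  have hpt : ∀ k : ℕ, X ≤ x * Real.exp (k * q) := by
    intro k
    have h1 : (1:ℝ) ≤ Real.exp (k * q) := by
      rw [Real.one_le_exp_iff]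
      positivity
    nlinarith
  have hWpos : ∀ s, X ≤ s → 0 < W s := fun s hs => hposX.trans_le (hmono X s le_rfl hs)
  intro k
  induction k with
  | zero => simp
  | succ k ih =>
    set a := x * Real.exp (k * q) with hadef
    set b := x * Real.exp ((k + 1 : ℕ) * q) with hbdef
    have hab : a ≤ b := by
      have : Real.exp ((k:ℝ) * q) ≤ Real.exp (((k:ℝ) + 1) * q) := by
        apply Real.exp_le_exp.2; nlinarith
      rw [hadef, hbdef]
      push_cast
      nlinarith
    have hlogq : Real.log b - Real.log a = q := by
      rw [hadef, hbdef, Real.log_mul hx0.ne' (Real.exp_ne_zero _),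
        Real.log_mul hx0.ne' (Real.exp_ne_zero _), Real.log_exp, Real.log_exp]
      push_cast; ring
    obtain ⟨hup, hlow⟩ := gronwall_step hX hadd hint hmono hub hlb hρp (hpt k) hab
    rw [hlogq] at hup hlow
    have hWa := hWpos a (hpt k)
    have hWb := hWpos b (le_trans (hpt k) hab)
    have h1p : 0 < 1 - ρp * q := by linarith
    have h1m : 0 < 1 + ρm * q := by linarith
    have hWaWb : W a ≤ W b := hmono a b (hpt k) hab
    constructor
    · have h2 : W b ≤ W a / (1 - ρp * q) := by
        rw [le_div_iff₀ h1p]; linarith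
      have h3 : W a / (1 - ρp * q) ≤ (W x / (1 - ρp * q) ^ k) / (1 - ρp * q) := by
        gcongr
        exact ih.1
      refine (h2.trans h3).trans_eq ?_
      rw [pow_succ, ← div_div]
    · have hstep : W a * (1 + ρm * q) ≤ W b := by
        rcases le_or_gt 0 ρm with hρ | hρ
        · have hmin : min (ρm * W a) (ρm * W b) = ρm * W a :=
            min_eq_left (by nlinarith)
          rw [hmin] at hlow
          nlinarith
        · have hmin : min (ρm * W a) (ρm * W b) = ρm * W b :=
            min_eq_right (by nlinarith)
          rw [hmin] at hlow
          nlinarith [sq_nonneg (ρm * q), mul_nonneg hWb.le (sq_nonneg (ρm * q))]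
      have h4 : W x * (1 + ρm * q) ^ k * (1 + ρm * q) ≤ W a * (1 + ρm * q) :=
        mul_le_mul_of_nonneg_right ih.2 h1m.le
      calc W x * (1 + ρm * q) ^ (k + 1) = W x * (1 + ρm * q) ^ k * (1 + ρm * q) := by ring
        _ ≤ W a * (1 + ρm * q) := h4
        _ ≤ W b := hstep

end Gronwall

lemma ratio_tendsto {W u : ℝ → ℝ} {ρ : ℝ}
    (hyp : ∀ ε : ℝ, 0 < ε → ∃ X : ℝ, 0 < X ∧
      (∀ a b, X ≤ a → a ≤ b → W b = W a + ∫ s in Ioc a b, u s) ∧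
      (∀ a b, X ≤ a → IntegrableOn u (Ioc a b) volume) ∧
      (∀ a b, X ≤ a → a ≤ b → W a ≤ W b) ∧ 0 < W X ∧
      (∀ s, X ≤ s → u s ≤ (ρ + ε) * W s / s) ∧ (∀ s, X ≤ s → (ρ - ε) * W s / s ≤ u s))
    (hρ : 0 ≤ ρ) {t : ℝ} (ht : 1 ≤ t) :
    Tendsto (fun x => W (t * x) / W x) atTop (𝓝 (t ^ ρ)) := by
  have ht0 : (0:ℝ) < t := lt_of_lt_of_le one_pos ht
  set L := Real.log t with hL
  have hL0 : 0 ≤ L := Real.log_nonneg ht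
  have htρ : t ^ ρ = Real.exp (ρ * L) := by
    rw [Real.rpow_def_of_pos ht0, mul_comm]
  rw [Metric.tendsto_nhds]
  intro δ hδ
  -- choose ε
  have hcont : ∀ c : ℝ, Tendsto (fun e : ℝ => Real.exp ((ρ + c * e) * L)) (𝓝 0)
      (𝓝 (Real.exp (ρ * L))) := by
    intro c
    have : Continuous fun e : ℝ => Real.exp ((ρ + c * e) * L) := by continuity
    simpa using this.tendsto 0
  have hev : ∀ᶠ e : ℝ in 𝓝 0, Real.exp ((ρ + 1 * e) * L) < t ^ ρ + δ/2 ∧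
      t ^ ρ - δ/2 < Real.exp ((ρ + (-1) * e) * L) := by
    refine ((hcont 1).eventually_lt_const ?_).and ((hcont (-1)).eventually_const_lt ?_) <;>
      rw [htρ] <;> linarith
  obtain ⟨ε, hεmem, hε1, hε2⟩ :
      ∃ ε : ℝ, ε ∈ Ioi (0:ℝ) ∧ Real.exp ((ρ + 1 * ε) * L) < t ^ ρ + δ/2 ∧
        t ^ ρ - δ/2 < Real.exp ((ρ + (-1) * ε) * L) := by
    have := (hev.filter_mono nhdsWithin_le_nhds).and (self_mem_nhdsWithin
      (s := Ioi (0:ℝ)) (a := (0:ℝ)))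
    obtain ⟨ε, ⟨h1, h2⟩, h3⟩ := this.exists
    exact ⟨ε, h3, h1, h2⟩
  have hε0 : 0 < ε := hεmem
  set ρp := ρ + ε with hρpd
  set ρm := ρ - ε with hρmd
  have hρp1 : Real.exp (ρp * L) < t ^ ρ + δ/2 := by simpa [hρpd] using hε1
  have hρm1 : t ^ ρ - δ/2 < Real.exp (ρm * L) := by
    have : ρ + (-1) * ε = ρm := by rw [hρmd]; ring
    rwa [this] at hε2
  obtain ⟨X, hX0, hadd, hint, hmono, hWX, hub, hlb⟩ := hyp ε hε0
  -- choose n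
  have htend1 : Tendsto (fun n : ℕ => ((1 + (-(ρp * L)) / n) ^ n)⁻¹) atTop
      (𝓝 (Real.exp (ρp * L))) := by
    have h := Real.tendsto_one_add_div_pow_exp (-(ρp * L))
    have := h.inv₀ (by positivity)
    simpa [Real.exp_neg] using this
  have htend2 : Tendsto (fun n : ℕ => (1 + (ρm * L) / n) ^ n) atTop
      (𝓝 (Real.exp (ρm * L))) := Real.tendsto_one_add_div_pow_exp (ρm * L)
  have htend3 : Tendsto (fun n : ℕ => (ρp * L) / n) atTop (𝓝 0) :=
    tendsto_const_div_atTop_nhds_zero_nat _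
  have htend4 : Tendsto (fun n : ℕ => (ρm * L) / n) atTop (𝓝 0) :=
    tendsto_const_div_atTop_nhds_zero_nat _
  have hevn : ∀ᶠ n : ℕ in atTop, (((1 + (-(ρp * L)) / n) ^ n)⁻¹ < t ^ ρ + δ) ∧
      (t ^ ρ - δ < (1 + (ρm * L) / n) ^ n) ∧ ((ρp * L) / n < 1) ∧
      (|(ρm * L) / n| < 1) ∧ 0 < n := by
    refine (htend1.eventually_lt_const (by linarith)).and
      ((htend2.eventually_const_lt (by linarith)).and
      ((htend3.eventually_lt_const one_pos).and
      (((htend4.eventually (eventually_abs_sub_lt 0 one_pos)).mono (by simp)).and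
        (eventually_gt_atTop 0))))
  obtain ⟨n, hn1, hn2, hn3, hn4, hn5⟩ := hevn.exists
  set q := L / n with hqd
  have hq0 : 0 ≤ q := by positivity
  have hqp : ρp * q < 1 := by
    rw [hqd, ← mul_div_assoc]; exact hn3
  have hqm : ρm * q < 1 := by
    rw [hqd, ← mul_div_assoc]
    calc ρm * L / n ≤ |ρm * L / n| := le_abs_self _
      _ < 1 := hn4
  have hqm' : -1 < ρm * q := by
    rw [hqd, ← mul_div_assoc]
    rcases abs_lt.1 hn4 with ⟨hh, _⟩; exact hh
  -- final bound
  rw [eventually_atTop]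
  refine ⟨X, fun x hx => ?_⟩
  have hx0 : 0 < x := hX0.trans_le hx
  have hWx : 0 < W x := hWX.trans_le (hmono X x le_rfl hx)
  have hchain := gronwall_chain hX0 hadd hint hmono hWX hub hlb (by linarith) hx hq0 hqp hqm hqm' n
  have hexp : x * Real.exp (n * q) = t * x := by
    rw [hqd, mul_div_assoc']
    rw [mul_comm (n:ℝ) L, mul_div_assoc, div_self (by exact_mod_cast hn5.ne'), mul_one,
      Real.exp_log ht0, mul_comm]
  rw [hexp] at hchain
  obtain ⟨hup, hlow⟩ := hchain
  have h1p : 0 < 1 - ρp * q := by linarith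
  have h1m : 0 < 1 + ρm * q := by linarith
  have hub' : W (t * x) / W x ≤ ((1 - ρp * q) ^ n)⁻¹ := by
    rw [div_le_iff₀ hWx]
    calc W (t * x) ≤ W x / (1 - ρp * q) ^ n := hup
      _ = ((1 - ρp * q) ^ n)⁻¹ * W x := by rw [div_eq_inv_mul]
  have hlb' : (1 + ρm * q) ^ n ≤ W (t * x) / W x := by
    rw [le_div_iff₀ hWx, mul_comm]
    exact hlow
  have he1 : 1 + (-(ρp * L)) / (n:ℝ) = 1 - ρp * q := by rw [hqd]; ring
  have he2 : 1 + (ρm * L) / (n:ℝ) = 1 + ρm * q := by rw [hqd]; ring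
  rw [he1] at hn1
  rw [he2] at hn2
  rw [Real.dist_eq, abs_lt]
  constructor <;> linarith

section Pos
variable (μ : Measure ℝ) [IsProbabilityMeasure μ]

lemma F_le_one' (x : ℝ) : distF μ x ≤ 1 := by
  have : μ (Iic x) ≤ 1 := (measure_mono (subset_univ _)).trans_eq measure_univ
  simpa [distF] using ENNReal.toReal_mono (by simp) this

lemma exists_small_F (hsupp : μ (Iic 0) = 0) :
    ∃ t0 : ℝ, 0 < t0 ∧ distF μ t0 ≤ 1/2 := by
  have hs : ∀ n : ℕ, NullMeasurableSet (Iic (((n:ℝ)+1)⁻¹)) μ :=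
    fun n => measurableSet_Iic.nullMeasurableSet
  have hm : Antitone fun n : ℕ => Iic (((n:ℝ)+1)⁻¹) := by
    intro m n hmn
    have h2 : (m:ℝ) + 1 ≤ (n:ℝ) + 1 := by
      have : (m:ℝ) ≤ n := by exact_mod_cast hmn
      linarith
    exact Iic_subset_Iic.2 (by gcongr)
  have hI : (⋂ n : ℕ, Iic (((n:ℝ)+1)⁻¹)) = Iic (0:ℝ) := by
    ext x
    simp only [mem_iInter, mem_Iic]
    constructor
    · intro hx
      by_contra hc
      push_neg at hc
      obtain ⟨n, hn⟩ := exists_nat_gt x⁻¹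
      have hn0 : (0:ℝ) < (n:ℝ) + 1 := by positivity
      have : ((n:ℝ)+1)⁻¹ < x := by
        rw [inv_lt_comm₀ hn0 hc]
        calc x⁻¹ < n := hn
          _ ≤ (n:ℝ) + 1 := by linarith
      linarith [hx n]
    · intro hx n
      have : (0:ℝ) < ((n:ℝ)+1)⁻¹ := by positivity
      linarith
  have htendsto := tendsto_measure_iInter_atTop (μ := μ) hs hm ⟨0, measure_ne_top μ _⟩
  rw [hI, hsupp] at htendsto
  have hlt : (0:ℝ≥0∞) < 1/2 := by norm_num
  have hev := htendsto.eventually_lt_const hlt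
  obtain ⟨n, hn⟩ := hev.exists
  refine ⟨((n:ℝ)+1)⁻¹, by positivity, ?_⟩
  have h2 : (ENNReal.ofReal (1/2) : ℝ≥0∞) = 1/2 := by
    rw [ENNReal.ofReal_div_of_pos] <;> norm_num
  rw [distF]
  calc (μ (Iic ((n:ℝ)+1)⁻¹)).toReal ≤ ((1:ℝ≥0∞)/2).toReal :=
        ENNReal.toReal_mono (by norm_num) (le_of_lt (by exact_mod_cast hn))
    _ = 1/2 := by simp
end Pos

section Glue
variable (μ : Measure ℝ) [IsProbabilityMeasure μ]

lemma W_pos (hsupp : μ (Iic 0) = 0) {α : ℝ} (hα : 0 < α) :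
    ∃ x1 : ℝ, 0 < x1 ∧ 0 < Wtr μ α x1 := by
  obtain ⟨t0, ht0, hF⟩ := exists_small_F μ hsupp
  refine ⟨t0, ht0, ?_⟩
  have hint1 : IntegrableOn (fun y : ℝ => (1/2) * y ^ (α - 1)) (Ioc 0 t0) := by
    have h1 : IntegrableOn (fun y : ℝ => y ^ (α - 1)) (Ioc 0 t0) := by
      have := intervalIntegral.intervalIntegrable_rpow' (a := 0) (b := t0)
        (show (-1:ℝ) < α - 1 by linarith)
      rwa [intervalIntegrable_iff_integrableOn_Ioc_of_le ht0.le] at this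
    exact h1.const_mul _
  have hpt : ∀ y ∈ Ioc (0:ℝ) t0, (1/2) * y ^ (α - 1) ≤ y ^ (α - 1) * (1 - distF μ y) := by
    intro y hy
    have h1 : distF μ y ≤ 1/2 := (F_mono μ hy.2).trans hF
    have h2 : (0:ℝ) ≤ y ^ (α - 1) := Real.rpow_nonneg hy.1.le _
    nlinarith
  have hle := setIntegral_mono_on hint1 (u_intOn μ hα le_rfl) measurableSet_Ioc hpt
  have hcomp : ∫ y in Ioc (0:ℝ) t0, (1/2) * y ^ (α - 1) = (1/2) * (t0 ^ α / α) := by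
    rw [← intervalIntegral.integral_of_le ht0.le, intervalIntegral.integral_const_mul,
      integral_rpow (Or.inl (show (-1:ℝ) < α - 1 by linarith))]
    rw [Real.zero_rpow (by linarith : α - 1 + 1 ≠ 0)]
    ring_nf
  rw [hcomp] at hle
  have : 0 < (1/2) * (t0 ^ α / α) := by
    have := Real.rpow_pos_of_pos ht0 α
    positivity
  exact lt_of_lt_of_le this hle

lemma hyp_holds (hsupp : μ (Iic 0) = 0) {α : ℝ} (hα : 0 < α) {l : ℝ}
    (h : Tendsto (fun x => (1 - distF μ x) / (1 - Gw μ α x)) atTop (𝓝 l)) :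
    ∀ ε : ℝ, 0 < ε → ∃ X : ℝ, 0 < X ∧
      (∀ a b, X ≤ a → a ≤ b → Wtr μ α b = Wtr μ α a +
        ∫ s in Ioc a b, s ^ (α - 1) * (1 - distF μ s)) ∧
      (∀ a b, X ≤ a → IntegrableOn (fun s : ℝ => s ^ (α - 1) * (1 - distF μ s))
        (Ioc a b) volume) ∧
      (∀ a b, X ≤ a → a ≤ b → Wtr μ α a ≤ Wtr μ α b) ∧ 0 < Wtr μ α X ∧
      (∀ s, X ≤ s → s ^ (α - 1) * (1 - distF μ s) ≤ (α * l + ε) * Wtr μ α s / s) ∧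
      (∀ s, X ≤ s → (α * l - ε) * Wtr μ α s / s ≤ s ^ (α - 1) * (1 - distF μ s)) := by
  intro ε hε
  obtain ⟨x1, hx10, hWx1⟩ := W_pos μ hsupp hα
  have hev := (Metric.tendsto_nhds.1 h) (ε/α) (by positivity)
  rw [eventually_atTop] at hev
  obtain ⟨a0, ha0⟩ := hev
  set X := max x1 a0 with hXd
  have hX0 : 0 < X := lt_of_lt_of_le hx10 (le_max_left _ _)
  refine ⟨X, hX0, fun a b hXa hab => W_add μ hα (hX0.trans_le hXa).le hab,
    fun a b hXa => u_intOn μ hα (hX0.trans_le hXa).le,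
    fun a b hXa hab => W_mono μ hα (hX0.trans_le hXa).le hab,
    lt_of_lt_of_le hWx1 (W_mono μ hα hx10.le (le_max_left _ _)), ?_, ?_⟩ <;>
  · intro s hs
    have hs0 : 0 < s := hX0.trans_le hs
    have hWs : 0 < Wtr μ α s :=
      lt_of_lt_of_le hWx1 (W_mono μ hα hx10.le ((le_max_left x1 a0).trans hs))
    have hsα : (0:ℝ) < s ^ α := Real.rpow_pos_of_pos hs0 _
    have hratio := ha0 s ((le_max_right x1 a0).trans hs)
    rw [Real.dist_eq] at hratio
    have hform : (1 - distF μ s) / (1 - Gw μ α s)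
        = s * (s ^ (α - 1) * (1 - distF μ s)) / (α * Wtr μ α s) := by
      rw [one_sub_Gw μ hsupp hα hs0, Real.rpow_sub_one hs0.ne']
      rw [div_div_eq_mul_div]
      field_simp
    rw [hform] at hratio
    rw [abs_lt] at hratio
    obtain ⟨hlo, hhi⟩ := hratio
    have hαW : (0:ℝ) < α * Wtr μ α s := by positivity
    have h1 : s * (s ^ (α - 1) * (1 - distF μ s)) < (l + ε/α) * (α * Wtr μ α s) := by
      rw [← div_lt_iff₀ hαW]; linarith
    have h2 : (l - ε/α) * (α * Wtr μ α s) < s * (s ^ (α - 1) * (1 - distF μ s)) := by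
      rw [← lt_div_iff₀ hαW]; linarith
    have hexp1 : (l + ε/α) * (α * Wtr μ α s) = (α * l + ε) * Wtr μ α s := by
      field_simp
    have hexp2 : (l - ε/α) * (α * Wtr μ α s) = (α * l - ε) * Wtr μ α s := by
      field_simp
    first
      | (rw [le_div_iff₀ hs0]; linarith)
      | (rw [div_le_iff₀ hs0]; linarith)

lemma Wratio (hsupp : μ (Iic 0) = 0) {α : ℝ} (hα : 0 < α) {l : ℝ} (hl0 : 0 ≤ l)
    (h : Tendsto (fun x => (1 - distF μ x) / (1 - Gw μ α x)) atTop (𝓝 l)) :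
    ∀ t : ℝ, 0 < t →
      Tendsto (fun x => Wtr μ α (t * x) / Wtr μ α x) atTop (𝓝 (t ^ (α * l))) := by
  have hbase : ∀ t : ℝ, 1 ≤ t →
      Tendsto (fun x => Wtr μ α (t * x) / Wtr μ α x) atTop (𝓝 (t ^ (α * l))) :=
    fun t ht => ratio_tendsto (hyp_holds μ hsupp hα h)
      (mul_nonneg hα.le hl0) ht
  intro t ht0
  rcases le_or_gt 1 t with h1 | h1
  · exact hbase t h1
  · have hs1 : 1 ≤ t⁻¹ := (one_le_inv₀ ht0).2 h1.le
    have hmulat : Tendsto (fun x : ℝ => t * x) atTop atTop :=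
      tendsto_id.const_mul_atTop ht0
    have hcomp := (hbase t⁻¹ hs1).comp hmulat
    have heq : (fun x => Wtr μ α (t⁻¹ * (t * x)) / Wtr μ α (t * x))
        = fun x => Wtr μ α x / Wtr μ α (t * x) := by
      funext x
      rw [← mul_assoc, inv_mul_cancel₀ ht0.ne', one_mul]
    rw [show ((fun x => Wtr μ α (t⁻¹ * x) / Wtr μ α x) ∘ fun x => t * x)
        = fun x => Wtr μ α (t⁻¹ * (t * x)) / Wtr μ α (t * x) from rfl, heq] at hcomp
    have hinv := hcomp.inv₀ (ne_of_gt (Real.rpow_pos_of_pos (by positivity) _))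
    have heq2 : (fun x => (Wtr μ α x / Wtr μ α (t * x))⁻¹)
        = fun x => Wtr μ α (t * x) / Wtr μ α x := by
      funext x; rw [inv_div]
    rw [heq2] at hinv
    have hval : ((t⁻¹) ^ (α * l))⁻¹ = t ^ (α * l) := by
      rw [Real.inv_rpow ht0.le, inv_inv]
    rw [hval] at hinv
    exact hinv

end Glue

theorem stmt16 (μ : Measure ℝ) [IsProbabilityMeasure μ] (hsupp : μ (Iic 0) = 0)
    (α : ℝ) (hα : 0 < α) (l : ℝ) (hl0 : 0 ≤ l) (hl1 : l < 1)
    (h : Tendsto (fun x => (1 - distF μ x) / (1 - Gw μ α x)) atTop (𝓝 l)) :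
    RegVary (fun x => 1 - Gw μ α x) (α * (l - 1)) := by
  intro t ht0
  have hW := Wratio μ hsupp hα hl0 h t ht0
  obtain ⟨x1, hx10, hWx1⟩ := W_pos μ hsupp hα
  have hwithin : (fun x => (1 - Gw μ α (t * x)) / (1 - Gw μ α x))
      =ᶠ[atTop] fun x => t ^ (-α) * (Wtr μ α (t * x) / Wtr μ α x) := by
    filter_upwards [eventually_ge_atTop (max x1 (x1 / t)), eventually_gt_atTop (0:ℝ)]
      with x hx hx0
    have hxx1 : x1 ≤ x := (le_max_left _ _).trans hx
    have htx1 : x1 ≤ t * x := by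
      have : x1 / t ≤ x := (le_max_right _ _).trans hx
      rw [div_le_iff₀ ht0] at this
      linarith [this]
    have htx0 : 0 < t * x := by positivity
    have hWx : 0 < Wtr μ α x := hWx1.trans_le (W_mono μ hα hx10.le hxx1)
    have hWtx : 0 < Wtr μ α (t * x) := hWx1.trans_le (W_mono μ hα hx10.le htx1)
    rw [one_sub_Gw μ hsupp hα hx0, one_sub_Gw μ hsupp hα htx0,
      Real.mul_rpow ht0.le hx0.le, Real.rpow_neg ht0.le]
    have h1 : (0:ℝ) < t ^ α := Real.rpow_pos_of_pos ht0 _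
    have h2 : (0:ℝ) < x ^ α := Real.rpow_pos_of_pos hx0 _
    field_simp
  have hlim : Tendsto (fun x => t ^ (-α) * (Wtr μ α (t * x) / Wtr μ α x)) atTop
      (𝓝 (t ^ (-α) * t ^ (α * l))) := hW.const_mul _
  have hval : t ^ (-α) * t ^ (α * l) = t ^ (α * (l - 1)) := by
    rw [← Real.rpow_add ht0]
    ring_nf
  rw [hval] at hlim
  exact hlim.congr' hwithin.symm
end

section
/- Let α>0 and let F be a distribution function on [0,∞) with F(0)=0 and finite α-th moment m(α)=∫_0^∞ y^α dF(y). Then x^α(1−F(x)) → 0 and x^α(1−G_α(x)) → m(α) as x→∞, where G_α is the Williamson transform of F. -/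
open MeasureTheory Set Filter Topology

theorem stmt17 (μ : Measure ℝ) [IsProbabilityMeasure μ] (hsupp : μ (Iic 0) = 0)
    (α : ℝ) (hα : 0 < α)
    (hmom : Integrable (fun y : ℝ => y ^ α) μ) :
    Tendsto (fun x => x ^ α * (1 - distF μ x)) atTop (𝓝 0) ∧
      Tendsto (fun x => x ^ α * (1 - Gw μ α x)) atTop (𝓝 (∫ y : ℝ, y ^ α ∂μ)) := by
  have hpos : ∀ᵐ t ∂μ, 0 < t := by
    rw [ae_iff]
    convert hsupp using 2
    ext t; simp [not_lt]
  have hIic : Tendsto (fun x : ℝ => ∫ y in Iic x, y ^ α ∂μ) atTop (𝓝 (∫ y, y ^ α ∂μ)) :=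
    (aecover_Iic (μ := μ) tendsto_id).integral_tendsto_of_countably_generated hmom
  have hF : ∀ x : ℝ, 1 - distF μ x = (μ (Ioi x)).toReal := by
    intro x
    have h1 : μ (Ioi x) = 1 - μ (Iic x) := by
      rw [← compl_Iic, measure_compl measurableSet_Iic (measure_ne_top μ _)]
      simp
    rw [distF, h1, ENNReal.toReal_sub_of_le prob_le_one (by simp)]
    simp
  have htail : Tendsto (fun x : ℝ => ∫ y in Ioi x, y ^ α ∂μ) atTop (𝓝 0) := by
    have heq : ∀ x : ℝ, ∫ y in Ioi x, y ^ α ∂μ = (∫ y, y ^ α ∂μ) - ∫ y in Iic x, y ^ α ∂μ := by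
      intro x
      have h := integral_add_compl (measurableSet_Iic (a := x)) hmom
      rw [compl_Iic] at h
      linarith
    simp_rw [heq]
    have := tendsto_const_nhds (x := ∫ y, y ^ α ∂μ) (f := atTop (α := ℝ)) |>.sub hIic
    simpa using this
  have hbound : ∀ᶠ x : ℝ in atTop,
      x ^ α * (1 - distF μ x) ≤ ∫ y in Ioi x, y ^ α ∂μ := by
    filter_upwards [eventually_ge_atTop (0:ℝ)] with x hx
    rw [hF]
    have h1 : x ^ α * (μ (Ioi x)).toReal = ∫ _ in Ioi x, x ^ α ∂μ := by
      rw [setIntegral_const, smul_eq_mul, mul_comm, Measure.real]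
    rw [h1]
    refine setIntegral_mono_on ?_ hmom.integrableOn measurableSet_Ioi ?_
    · exact integrableOn_const (measure_ne_top μ _)
    · intro y hy
      exact Real.rpow_le_rpow hx (le_of_lt hy) hα.le
  have hnn : ∀ᶠ x : ℝ in atTop, (0:ℝ) ≤ x ^ α * (1 - distF μ x) := by
    filter_upwards [eventually_ge_atTop (0:ℝ)] with x hx
    rw [hF]
    exact mul_nonneg (Real.rpow_nonneg hx α) ENNReal.toReal_nonneg
  have part1 : Tendsto (fun x => x ^ α * (1 - distF μ x)) atTop (𝓝 0) :=
    tendsto_of_tendsto_of_tendsto_of_le_of_le' tendsto_const_nhds htail hnn hbound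
  refine ⟨part1, ?_⟩
  have key : ∀ᶠ x : ℝ in atTop, x ^ α * (1 - Gw μ α x)
      = x ^ α * (1 - distF μ x) + ∫ t in Iic x, t ^ α ∂μ := by
    filter_upwards [eventually_gt_atTop (0:ℝ)] with x hx
    have hxα : (0:ℝ) < x ^ α := Real.rpow_pos_of_pos hx α
    have hae : (fun t : ℝ => (t / x) ^ α) =ᵐ[μ.restrict (Iic x)]
        fun t => t ^ α / x ^ α := by
      filter_upwards [ae_restrict_of_ae hpos] with t ht
      rw [Real.div_rpow ht.le hx.le]
    have hint2 : Integrable (fun t : ℝ => (t / x) ^ α) (μ.restrict (Iic x)) :=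
      (((hmom.restrict (s := Iic x))).div_const (x ^ α)).congr hae.symm
    have hG : Gw μ α x = distF μ x - (∫ t in Iic x, t ^ α ∂μ) / x ^ α := by
      rw [Gw, integral_sub (integrable_const 1) hint2]
      congr 1
      · rw [setIntegral_const, smul_eq_mul, mul_one, distF, Measure.real]
      · rw [integral_congr_ae hae, integral_div]
    rw [hG]
    field_simp
    ring
  have := (part1.add hIic)
  rw [zero_add] at this
  exact this.congr' (key.mono fun x h => h.symm)
end

section
/- Let α>0 and suppose a nondecreasing function W on [0,∞) satisfies: there exist functions A>0, B, C such that for all z>1, (W(zx)−W(x))/A(x) → B(z) and (W(zx)−W(x))/A(zx) → C(z) as x→∞, with α·B(z)/(z^α−1) → ξ and α·C(z)/(1−z^{-α}) → ξ as z↓1, where W(x)=∫_0^x y^{α-1}(1−F(y))dy for a distribution function F. Then x^α(1−F(x))/A(x) → ξ as x→∞. -/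
open MeasureTheory Set Filter Topology

lemma distF_mono (μ : Measure ℝ) [IsProbabilityMeasure μ] : Monotone (distF μ) :=
  fun a b hab => ENNReal.toReal_mono (measure_ne_top μ _) (measure_mono (Iic_subset_Iic.2 hab))

lemma distF_nonneg (μ : Measure ℝ) (x : ℝ) : 0 ≤ distF μ x := ENNReal.toReal_nonneg

lemma distF_le_one (μ : Measure ℝ) [IsProbabilityMeasure μ] (x : ℝ) : distF μ x ≤ 1 := by
  have h : (μ (Iic x)).toReal ≤ (1 : ENNReal).toReal :=
    ENNReal.toReal_mono ENNReal.one_ne_top prob_le_one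
  simpa [distF] using h

lemma wtr_key (μ : Measure ℝ) [IsProbabilityMeasure μ] (α : ℝ) (hα : 0 < α) (x b : ℝ)
    (hx : 0 < x) (hxb : x ≤ b) :
    (1 - distF μ b) * ((b ^ α - x ^ α) / α) ≤ Wtr μ α b - Wtr μ α x ∧
      Wtr μ α b - Wtr μ α x ≤ (1 - distF μ x) * ((b ^ α - x ^ α) / α) := by
  have hb : 0 < b := lt_of_lt_of_le hx hxb
  have hrpow : IntegrableOn (fun y : ℝ => y ^ (α - 1)) (Ioc 0 b) := by
    have h := intervalIntegral.intervalIntegrable_rpow' (a := 0) (b := b)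
      (show (-1 : ℝ) < α - 1 by linarith)
    rwa [intervalIntegrable_iff_integrableOn_Ioc_of_le hb.le] at h
  have hmeas : Measurable (fun y => 1 - distF μ y) :=
    measurable_const.sub (distF_mono μ).measurable
  have hint : IntegrableOn (fun y : ℝ => y ^ (α - 1) * (1 - distF μ y)) (Ioc 0 b) := by
    apply hrpow.mono' (((show Measurable fun y : ℝ => y ^ (α-1) by fun_prop).mul hmeas).aestronglyMeasurable)
    rw [ae_restrict_iff' measurableSet_Ioc]
    filter_upwards with y hy
    have hy0 : (0:ℝ) ≤ y := hy.1.le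
    have h1 : |1 - distF μ y| ≤ 1 :=
      abs_le.2 ⟨by linarith [distF_le_one μ y], by linarith [distF_nonneg μ y]⟩
    have h2 : (0:ℝ) ≤ y ^ (α - 1) := Real.rpow_nonneg hy0 _
    calc ‖y ^ (α - 1) * (1 - distF μ y)‖ = y ^ (α - 1) * |1 - distF μ y| := by
          rw [norm_mul, Real.norm_eq_abs, Real.norm_eq_abs, abs_of_nonneg h2]
      _ ≤ y ^ (α - 1) * 1 := mul_le_mul_of_nonneg_left h1 h2
      _ = y ^ (α - 1) := mul_one _
  have hsub1 : IntegrableOn (fun y : ℝ => y ^ (α - 1) * (1 - distF μ y)) (Ioc 0 x) :=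
    hint.mono_set (Ioc_subset_Ioc_right hxb)
  have hsub2 : IntegrableOn (fun y : ℝ => y ^ (α - 1) * (1 - distF μ y)) (Ioc x b) :=
    hint.mono_set (Ioc_subset_Ioc_left hx.le)
  have hrpow2 : IntegrableOn (fun y : ℝ => y ^ (α - 1)) (Ioc x b) :=
    hrpow.mono_set (Ioc_subset_Ioc_left hx.le)
  have hsplit : Wtr μ α b - Wtr μ α x = ∫ y in Ioc x b, y ^ (α - 1) * (1 - distF μ y) := by
    rw [Wtr, Wtr, ← Ioc_union_Ioc_eq_Ioc hx.le hxb,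
      setIntegral_union (Ioc_disjoint_Ioc_of_le le_rfl) measurableSet_Ioc hsub1 hsub2]
    ring
  have hIrpow : (∫ y in Ioc x b, y ^ (α - 1)) = (b ^ α - x ^ α) / α := by
    rw [← intervalIntegral.integral_of_le hxb,
      integral_rpow (Or.inl (show (-1:ℝ) < α - 1 by linarith))]
    rw [show α - 1 + 1 = α by ring]
  constructor
  · rw [hsplit, ← hIrpow, ← integral_const_mul]
    apply setIntegral_mono_on (hrpow2.const_mul _) hsub2 measurableSet_Ioc
    intro y hy
    have h2 : (0:ℝ) ≤ y ^ (α - 1) := Real.rpow_nonneg (hx.trans hy.1).le _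
    have hF : distF μ y ≤ distF μ b := distF_mono μ hy.2
    calc (1 - distF μ b) * y ^ (α - 1) = y ^ (α - 1) * (1 - distF μ b) := mul_comm _ _
      _ ≤ y ^ (α - 1) * (1 - distF μ y) := mul_le_mul_of_nonneg_left (by linarith) h2
  · rw [hsplit, ← hIrpow, ← integral_const_mul]
    apply setIntegral_mono_on hsub2 (hrpow2.const_mul _) measurableSet_Ioc
    intro y hy
    have h2 : (0:ℝ) ≤ y ^ (α - 1) := Real.rpow_nonneg (hx.trans hy.1).le _
    have hF : distF μ x ≤ distF μ y := distF_mono μ hy.1.le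
    calc y ^ (α - 1) * (1 - distF μ y) ≤ y ^ (α - 1) * (1 - distF μ x) :=
          mul_le_mul_of_nonneg_left (by linarith) h2
      _ = (1 - distF μ x) * y ^ (α - 1) := mul_comm _ _

theorem stmt19 (μ : Measure ℝ) [IsProbabilityMeasure μ] (hsupp : μ (Iic 0) = 0)
    (α : ℝ) (hα : 0 < α) (A B C : ℝ → ℝ) (hA : ∀ x : ℝ, 0 < x → 0 < A x) (ξ : ℝ)
    (hB : ∀ z : ℝ, 1 < z →
      Tendsto (fun x => (Wtr μ α (z * x) - Wtr μ α x) / A x) atTop (𝓝 (B z)))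
    (hC : ∀ z : ℝ, 1 < z →
      Tendsto (fun x => (Wtr μ α (z * x) - Wtr μ α x) / A (z * x)) atTop (𝓝 (C z)))
    (hBlim : Tendsto (fun z => α * B z / (z ^ α - 1)) (𝓝[>] (1:ℝ)) (𝓝 ξ))
    (hClim : Tendsto (fun z => α * C z / (1 - z ^ (-α))) (𝓝[>] (1:ℝ)) (𝓝 ξ)) :
    Tendsto (fun x => x ^ α * (1 - distF μ x) / A x) atTop (𝓝 ξ) := by
  
  rw [tendsto_order]
  constructor
  · intro a ha
    obtain ⟨z, hza, hz1⟩ :=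
      ((hBlim.eventually (eventually_gt_nhds ha)).and self_mem_nhdsWithin).exists
    have hz : 1 < z := hz1
    have hz0 : (0:ℝ) < z := by linarith
    have hzα : 0 < z ^ α - 1 := by
      have h1 : (1:ℝ) < z ^ α := (Real.one_lt_rpow_iff_of_pos hz0).2 (Or.inl ⟨hz, hα⟩)
      linarith
    have htend : Tendsto (fun x => α / (z ^ α - 1) * ((Wtr μ α (z * x) - Wtr μ α x) / A x))
        atTop (𝓝 (α / (z ^ α - 1) * B z)) := (hB z hz).const_mul _
    have hlt : a < α / (z ^ α - 1) * B z := by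
      have heq : α / (z ^ α - 1) * B z = α * B z / (z ^ α - 1) := by ring
      rwa [heq]
    filter_upwards [htend.eventually (eventually_gt_nhds hlt), eventually_gt_atTop (0:ℝ)]
      with x h1 h2
    have hxb : x ≤ z * x := by nlinarith
    have hk := (wtr_key μ α hα x (z * x) h2 hxb).2
    have hzx : (z * x) ^ α = z ^ α * x ^ α := Real.mul_rpow hz0.le h2.le
    have hAx := hA x h2
    have hFx := distF_le_one μ x
    have hkey : α / (z ^ α - 1) * (Wtr μ α (z * x) - Wtr μ α x) ≤ x ^ α * (1 - distF μ x) := by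
      have h3 : α / (z ^ α - 1) * ((1 - distF μ x) * (((z * x) ^ α - x ^ α) / α))
          = x ^ α * (1 - distF μ x) := by
        rw [hzx]; field_simp
      calc α / (z ^ α - 1) * (Wtr μ α (z * x) - Wtr μ α x)
          ≤ α / (z ^ α - 1) * ((1 - distF μ x) * (((z * x) ^ α - x ^ α) / α)) :=
            mul_le_mul_of_nonneg_left hk (by positivity)
        _ = x ^ α * (1 - distF μ x) := h3
    calc a < α / (z ^ α - 1) * ((Wtr μ α (z * x) - Wtr μ α x) / A x) := h1
      _ = α / (z ^ α - 1) * (Wtr μ α (z * x) - Wtr μ α x) / A x := by ring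
      _ ≤ x ^ α * (1 - distF μ x) / A x := by
          gcongr
  · intro a ha
    obtain ⟨z, hza, hz1⟩ :=
      ((hClim.eventually (eventually_lt_nhds ha)).and self_mem_nhdsWithin).exists
    have hz : 1 < z := hz1
    have hz0 : (0:ℝ) < z := by linarith
    have hzα : 0 < 1 - z ^ (-α) := by
      have h1 : z ^ (-α) < 1 := Real.rpow_lt_one_of_one_lt_of_neg hz (by linarith)
      linarith
    have hzz : z ^ (-α) * z ^ α = 1 := by
      rw [← Real.rpow_add hz0]; simp
    have htend : Tendsto (fun x => α / (1 - z ^ (-α)) * ((Wtr μ α (z * x) - Wtr μ α x) / A (z * x)))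
        atTop (𝓝 (α / (1 - z ^ (-α)) * C z)) := (hC z hz).const_mul _
    have hlt : α / (1 - z ^ (-α)) * C z < a := by
      have heq : α / (1 - z ^ (-α)) * C z = α * C z / (1 - z ^ (-α)) := by ring
      rwa [heq]
    have hev : ∀ᶠ x : ℝ in atTop,
        (z * x) ^ α * (1 - distF μ (z * x)) / A (z * x) < a := by
      filter_upwards [htend.eventually (eventually_lt_nhds hlt), eventually_gt_atTop (0:ℝ)]
        with x h1 h2
      have hxb : x ≤ z * x := by nlinarith
      have hk := (wtr_key μ α hα x (z * x) h2 hxb).1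
      have hzx : (z * x) ^ α = z ^ α * x ^ α := Real.mul_rpow hz0.le h2.le
      have hAzx := hA (z * x) (by positivity)
      have hFzx := distF_le_one μ (z * x)
      have hkey : (z * x) ^ α * (1 - distF μ (z * x))
          ≤ α / (1 - z ^ (-α)) * (Wtr μ α (z * x) - Wtr μ α x) := by
        have h3 : α / (1 - z ^ (-α)) * ((1 - distF μ (z * x)) * (((z * x) ^ α - x ^ α) / α))
            = (z * x) ^ α * (1 - distF μ (z * x)) := by
          have hx' : x ^ α = z ^ (-α) * (z * x) ^ α := by
            rw [hzx, ← mul_assoc, hzz, one_mul]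
          rw [hx']
          field_simp
        calc (z * x) ^ α * (1 - distF μ (z * x))
            = α / (1 - z ^ (-α)) * ((1 - distF μ (z * x)) * (((z * x) ^ α - x ^ α) / α)) :=
              h3.symm
          _ ≤ α / (1 - z ^ (-α)) * (Wtr μ α (z * x) - Wtr μ α x) :=
              mul_le_mul_of_nonneg_left hk (by positivity)
      calc (z * x) ^ α * (1 - distF μ (z * x)) / A (z * x)
          ≤ α / (1 - z ^ (-α)) * (Wtr μ α (z * x) - Wtr μ α x) / A (z * x) :=
            by gcongr
        _ = α / (1 - z ^ (-α)) * ((Wtr μ α (z * x) - Wtr μ α x) / A (z * x)) := by ring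
        _ < a := h1
    have hdiv : Tendsto (fun y : ℝ => y / z) atTop atTop :=
      tendsto_id.atTop_div_const hz0
    filter_upwards [hdiv.eventually hev] with y hy
    have : z * (y / z) = y := by field_simp
    rwa [this] at hy
end
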